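/- arXiv:2507.03982 — 9 statements merged into one kernel-verified Lean document; each statement's English description precedes it below -/
import Mathlib

section
/- Let (X, f) be a dynamical system, where X is a compact uniform space and f : X → X is a continuous surjection. If f has topological shadowing, then the set of non-wandering points equals the set of chain recurrent points: Ω(f) = CR(f). -/
open Filter Set Function

section Defs

variable {X : Type*} [UniformSpace X]

/-- A `D`-chain from `x` to `y`: a finite sequence `x = c 0, c 1, …, c n` (`n ≥ 1`)
with `c n = y` and `(f (c i), c (i+1)) ∈ D` for all `i < n`. -/
def DChain (f : X → X) (D : Set (X × X)) (x y : X) : Prop :=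
  ∃ n : ℕ, 1 ≤ n ∧ ∃ c : ℕ → X, c 0 = x ∧ c n = y ∧ ∀ i < n, (f (c i), c (i + 1)) ∈ D

/-- A `D`-chain from `x` to `y` contained in the set `S`. -/
def DChainIn (f : X → X) (D : Set (X × X)) (S : Set X) (x y : X) : Prop :=
  ∃ n : ℕ, 1 ≤ n ∧ ∃ c : ℕ → X, c 0 = x ∧ c n = y ∧ (∀ i ≤ n, c i ∈ S) ∧
    ∀ i < n, (f (c i), c (i + 1)) ∈ D

/-- The set of chain-recurrent points of `f`. -/
def CR (f : X → X) : Set X :=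
  {x | ∀ D ∈ uniformity X, DChain f D x x}

/-- The set of non-wandering points of `f`. -/
def NonWandering (f : X → X) : Set X :=
  {x | ∀ U : Set X, IsOpen U → x ∈ U → ∃ n : ℕ, 1 ≤ n ∧ (f^[n] '' U ∩ U).Nonempty}

/-- `(x i)` is a `D`-pseudo orbit on the set `A ⊆ ℕ`. -/
def PseudoOrbitOn (f : X → X) (D : Set (X × X)) (x : ℕ → X) (A : Set ℕ) : Prop :=
  ∀ i ∈ A, (f (x i), x (i + 1)) ∈ D

/-- `(x i)` is `E`-traced by `y` on the set `B ⊆ ℕ`. -/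
def TracedOn (f : X → X) (E : Set (X × X)) (x : ℕ → X) (y : X) (B : Set ℕ) : Prop :=
  ∀ i ∈ B, (f^[i] y, x i) ∈ E

/-- Topological shadowing. -/
def TopShadowing (f : X → X) : Prop :=
  ∀ E ∈ uniformity X, ∃ D ∈ uniformity X,
    ∀ x : ℕ → X, PseudoOrbitOn f D x Set.univ → ∃ y : X, TracedOn f E x y Set.univ

/-- Topological `(F, G)`-shadowing for families `F`, `G` of subsets of `ℕ`. -/
def FGShadowing (f : X → X) (F G : Set (Set ℕ)) : Prop :=
  ∀ E ∈ uniformity X, ∃ D ∈ uniformity X,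
    ∀ x : ℕ → X, (∃ A ∈ F, PseudoOrbitOn f D x A) →
      ∃ y : X, ∃ B ∈ G, TracedOn f E x y B

end Defs

/-- A set `A ⊆ ℕ` is syndetic: gaps are bounded. -/
def Syndetic (A : Set ℕ) : Prop :=
  ∃ M : ℕ, ∀ k : ℕ, ∃ j ∈ A, k ≤ j ∧ j ≤ k + M

/-- A set `A ⊆ ℕ` is thick: contains arbitrarily long blocks of consecutive numbers. -/
def Thick (A : Set ℕ) : Prop :=
  ∀ n : ℕ, ∃ k : ℕ, ∀ i < n, k + i ∈ A

/-- A set `A ⊆ ℕ` is thickly syndetic. -/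
def ThicklySyndetic (A : Set ℕ) : Prop :=
  ∀ n : ℕ, Syndetic {k : ℕ | ∀ i < n, k + i ∈ A}

/-- A set `A ⊆ ℕ` is piecewise syndetic. -/
def PiecewiseSyndetic (A : Set ℕ) : Prop :=
  ∃ T S : Set ℕ, Thick T ∧ Syndetic S ∧ A = T ∩ S

/-- The family of thick subsets of `ℕ`. -/
def thickFamily : Set (Set ℕ) := {A | Thick A}

/-- The family of piecewise syndetic subsets of `ℕ`. -/
def psFamily : Set (Set ℕ) := {A | PiecewiseSyndetic A}

open scoped Classical in
/-- The lower density of a subset of `ℕ`. -/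
noncomputable def lowerDensity (A : Set ℕ) : ℝ :=
  Filter.atTop.liminf fun n : ℕ => ((Finset.range n).filter (· ∈ A)).card / (n : ℝ)

/-- The family of subsets of `ℕ` of lower density `1`. -/
noncomputable def densityOneFamily : Set (Set ℕ) := {A | lowerDensity A = 1}

section Dyn

variable {X : Type*} [UniformSpace X]

/-- `x` is a minimal point of `f`. -/
def MinimalPt (f : X → X) (x : X) : Prop :=
  ∀ U : Set X, IsOpen U → x ∈ U → Syndetic {n : ℕ | f^[n] x ∈ U}

/-- `(x, y)` is a syndetically proximal pair for `f`. -/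
def SyndProx (f : X → X) (x y : X) : Prop :=
  ∀ E ∈ uniformity X, Syndetic {n : ℕ | (f^[n] x, f^[n] y) ∈ E}

end Dyn

/-
Ω(f) ⊆ CR(f) for any continuous f: if an orbit segment starts near x and returns near x, replacing
its first and last points by x gives a D-chain from x to x. Conversely, a D-chain from x to x repeated
periodically is a D-pseudo orbit passing through x at times 0 and n; a point shadowing it closely
enough lies in a given neighbourhood U of x and returns to U at time n, so x is non-wandering.
-/

section ChainRecurrence

variable {X : Type*} {f : X → X}

theorem DChain.exists_periodic_pseudoOrbit {D : SetRel X X} {x : X} (h : DChain f D x x) :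
    ∃ n, 1 ≤ n ∧ ∃ p : ℕ → X, p 0 = x ∧ p n = x ∧ PseudoOrbitOn f D p univ := by
  obtain ⟨n, hn, c, hc0, hcn, hstep⟩ := h
  refine ⟨n, hn, fun i => c (i % n), by simpa using hc0, by simpa using hc0, fun i _ => ?_⟩
  have hlt : i % n < n := Nat.mod_lt _ (by omega)
  have hsucc : (i + 1) % n = (i % n + 1) % n := (Nat.mod_add_mod i n 1).symm
  show (f (c (i % n)), c ((i + 1) % n)) ∈ D
  by_cases hwrap : i % n + 1 = n
  · have h0 : (i + 1) % n = 0 := by rw [hsucc, hwrap, Nat.mod_self]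
    simpa [h0, hwrap, hcn, hc0] using hstep _ hlt
  · rw [show (i + 1) % n = i % n + 1 by rw [hsucc, Nat.mod_eq_of_lt (by omega)]]
    exact hstep _ hlt

variable [UniformSpace X]

open SetRel

/-- The chain `x, f z, …, f^[n-1] z, y`: every step passes through the orbit point `f^[i+1] z`. -/
theorem dChain_of_orbit_segment {V D : SetRel X X} (hV : V ∈ uniformity X) (hVD : V ○ V ⊆ D)
    {x y z : X} {n : ℕ} (hn : 1 ≤ n) (hx : (f x, f z) ∈ V) (hy : (f^[n] z, y) ∈ V) :
    DChain f D x y := by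
  let c : ℕ → X := fun i => if i = 0 then x else if i = n then y else f^[i] z
  refine ⟨n, hn, c, if_pos rfl, by simp [c, show n ≠ 0 by omega], fun i hi => hVD ?_⟩
  refine ⟨f^[i + 1] z, ?_, ?_⟩
  · by_cases hi0 : i = 0
    · simpa [c, hi0] using hx
    · simpa [c, hi0, hi.ne, ← iterate_succ_apply' f i z] using refl_mem_uniformity hV
  · by_cases hin : i + 1 = n
    · simpa [c, hin, show n ≠ 0 by omega] using hy
    · simpa [c, hin] using refl_mem_uniformity hV

theorem nonWandering_subset_CR (hf : Continuous f) : NonWandering f ⊆ CR f := by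
  intro x hx D hD
  obtain ⟨V, hV, hVo, hVs, hVD⟩ := comp_open_symm_mem_uniformity_sets hD
  let U := f ⁻¹' UniformSpace.ball (f x) V ∩ UniformSpace.ball x V
  have hUo : IsOpen U :=
    ((UniformSpace.isOpen_ball _ hVo).preimage hf).inter (UniformSpace.isOpen_ball _ hVo)
  have hxU : x ∈ U := ⟨refl_mem_uniformity hV, refl_mem_uniformity hV⟩
  obtain ⟨n, hn, _, ⟨z, hzU, rfl⟩, hnz⟩ := hx U hUo hxU
  exact dChain_of_orbit_segment hV hVD hn hzU.1 (SetRel.symm V hnz.2)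

theorem CR_subset_nonWandering (hsh : TopShadowing f) : CR f ⊆ NonWandering f := by
  intro x hx U hUo hxU
  let E : SetRel X X := {q | q.2 = x → q.1 ∈ U}
  have hE : E ∈ uniformity X := mem_nhds_uniformity_iff_left.mp (hUo.mem_nhds hxU)
  obtain ⟨D, hD, htrace⟩ := hsh E hE
  obtain ⟨n, hn, p, hp0, hpn, hp⟩ := (hx D hD).exists_periodic_pseudoOrbit
  obtain ⟨y, hy⟩ := htrace p hp
  exact ⟨n, hn, f^[n] y, ⟨y, hy 0 trivial hp0, rfl⟩, hy n trivial hpn⟩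

end ChainRecurrence

theorem nonWandering_eq_chainRecurrent_of_shadowing_general
    {X : Type*} [UniformSpace X]
    (f : X → X) (hf : Continuous f)
    (hsh : TopShadowing f) :
    NonWandering f = CR f :=
  (nonWandering_subset_CR hf).antisymm (CR_subset_nonWandering hsh)

/-- with topological shadowing, Ω(f) = CR(f). -/
theorem nonWandering_eq_chainRecurrent_of_shadowing
    {X : Type*} [UniformSpace X] [CompactSpace X]
    (f : X → X) (hf : Continuous f) (hsurj : Function.Surjective f)
    (hsh : TopShadowing f) :
    NonWandering f = CR f :=
  nonWandering_eq_chainRecurrent_of_shadowing_general f hf hsh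
end

section
/- Let (X, f) be a dynamical system, where X is a compact uniform space and f : X → X is a continuous surjection. If f has topological shadowing, then f has topological (F_t, F_t)-shadowing, where F_t is the family of thick subsets of ℕ. -/
open Filter Set Function

/-
Fix a symmetric entourage `V` with `V ○ V ○ V ⊆ D`, where `D` comes from shadowing, and a
`V`-pseudo orbit `x` on a thick set `A`. Covering `X` by finitely many `V`-balls and applying the
pigeonhole principle on long blocks of `A`, some ball is the hub of arbitrarily long, arbitrarily
late runs: intervals `[p, q) ⊆ A` with `x p` and `x q` in the ball. From the end of a run one may
jump, at the cost of one `D`-error, to the start of any other run, so runs can be replayed at any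
time. Playing long runs at their own times and filling the gaps between them with replayed runs
gives a reindexing `φ` for which `x ∘ φ` is a `D`-pseudo orbit agreeing with `x` on a thick set;
a point shadowing it traces `x` there. The gaps can be filled exactly once the endpoints of the
runs used are fixed modulo the length of one run.
-/

section Chains

variable {α : Type*}

def ChainOn (R : α → α → Prop) (ψ : ℕ → α) (a b : ℕ) : Prop :=
  ∀ t, a ≤ t → t < b → R (ψ t) (ψ (t + 1))

variable {R : α → α → Prop}

theorem ite_le_eq_right {ψ₁ ψ₂ : ℕ → α} {b t : ℕ} (hb : ψ₁ b = ψ₂ b) (ht : b ≤ t) :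
    (if t ≤ b then ψ₁ t else ψ₂ t) = ψ₂ t := by
  split_ifs with h
  · rw [le_antisymm h ht, hb]
  · rfl

theorem ChainOn.piecewise {ψ₁ ψ₂ : ℕ → α} {a b c : ℕ} (h₁ : ChainOn R ψ₁ a b)
    (h₂ : ChainOn R ψ₂ b c) (hb : ψ₁ b = ψ₂ b) :
    ChainOn R (fun t => if t ≤ b then ψ₁ t else ψ₂ t) a c := by
  intro t hat htc
  rcases lt_or_ge t b with htb | htb
  · simp only [if_pos htb.le, if_pos (Nat.succ_le_of_lt htb)]
    exact h₁ t hat htb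
  · dsimp only
    rw [ite_le_eq_right hb htb, ite_le_eq_right hb (by omega)]
    exact h₂ t htb htc

theorem exists_chain_of_chainOn_stages {T : ℕ → ℕ} (hT : StrictMono T) {ψ : ℕ → ℕ → α}
    (hψ : ∀ m, ChainOn R (ψ m) (T m) (T (m + 1)))
    (hjoin : ∀ m, ψ (m + 1) (T (m + 1)) = ψ m (T (m + 1))) :
    ∃ φ : ℕ → α, (∀ t, T 0 ≤ t → R (φ t) (φ (t + 1))) ∧
      ∀ m t, T m ≤ t → t < T (m + 1) → φ t = ψ m t := by
  classical
  have hex : ∀ t, ∃ m, t < T (m + 1) := fun t => ⟨t, hT.id_le (t + 1)⟩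
  have hstage : ∀ m t, T m ≤ t → t < T (m + 1) → Nat.find (hex t) = m := by
    intro m t hmt htm
    refine le_antisymm (Nat.find_min' _ htm) (not_lt.1 fun hlt => ?_)
    have := hT.monotone (show Nat.find (hex t) + 1 ≤ m by omega)
    have := Nat.find_spec (hex t)
    omega
  have hbelow : ∀ t, T 0 ≤ t → T (Nat.find (hex t)) ≤ t := by
    intro t ht
    cases h : Nat.find (hex t) with
    | zero => exact ht
    | succ k =>
      have := Nat.find_min (hex t) (show k < Nat.find (hex t) by omega)
      omega
  refine ⟨fun t => ψ (Nat.find (hex t)) t, fun t ht => ?_,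
    fun m t h₁ h₂ => by simp only [hstage m t h₁ h₂]⟩
  obtain ⟨m, hm⟩ : ∃ m, Nat.find (hex t) = m := ⟨_, rfl⟩
  have h₁ : T m ≤ t := hm ▸ hbelow t ht
  have h₂ : t < T (m + 1) := hm ▸ Nat.find_spec (hex t)
  simp only [hm]
  rcases (show t + 1 < T (m + 1) ∨ t + 1 = T (m + 1) by omega) with hlt | heq
  · rw [hstage m (t + 1) (by omega) hlt]
    exact hψ m t h₁ h₂
  · have := hT (show m + 1 < m + 1 + 1 by omega)
    rw [hstage (m + 1) (t + 1) (by omega) (by omega), heq, hjoin, ← heq]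
    exact hψ m t h₁ h₂

end Chains

theorem Finset.exists_mem_forall_of_antitone {ι : Type*} {s : Finset ι} {P : ι → ℕ → Prop}
    (hP : ∀ i, Antitone (P i)) (h : ∀ N, ∃ i ∈ s, P i N) : ∃ i ∈ s, ∀ N, P i N := by
  by_contra! hne
  choose! N hN using hne
  obtain ⟨i, hi, hPi⟩ := h (s.sup N)
  exact hN i hi (hP i (Finset.le_sup hi) hPi)

theorem Nat.dvd_sub_add_sub_of_modEq {n a b c d : ℕ} (hac : a ≡ c [MOD n]) (hbd : b ≡ d [MOD n])
    (hba : b ≤ a) (hcd : c ≤ d) : n ∣ (a - b) + (d - c) := by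
  have : (a - b) + (d - c) + (b + c) ≡ 0 + (b + c) [MOD n] := by
    rw [show (a - b) + (d - c) + (b + c) = a + d by omega, zero_add, add_comm b c]
    exact hac.add hbd.symm
  exact Nat.modEq_zero_iff_dvd.1 (Nat.ModEq.add_right_cancel' _ this)

theorem AddSubmonoid.mem_of_dvd_add {M : AddSubmonoid ℕ} {a b n : ℕ} (ha : a ∈ M) (hb : b ∈ M)
    (hdvd : a ∣ n + b) (hn : a * b ≤ n) : n ∈ M := by
  obtain ⟨c, hc⟩ := hdvd
  rcases a with _ | a
  · obtain rfl : n = 0 := by omega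
    exact M.zero_mem
  have hbc : b ≤ c := Nat.le_of_mul_le_mul_left (by linarith) a.succ_pos
  obtain ⟨d, rfl⟩ := Nat.exists_eq_add_of_le hbc
  have : n = a • b + d • (a + 1) := by simp only [smul_eq_mul]; nlinarith
  rw [this]
  exact M.add_mem (M.nsmul_mem hb a) (M.nsmul_mem ha d)

section Runs

variable (A H : Set ℕ)

def IsRun (p q : ℕ) : Prop :=
  p < q ∧ Ico p q ⊆ A ∧ p ∈ H ∧ q ∈ H

def IsExit (e : ℕ) : Prop :=
  e ∈ A ∧ e + 1 ∈ H

def Hop (a b : ℕ) : Prop :=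
  a ∈ A ∧ (b = a + 1 ∨ a + 1 ∈ H ∧ b ∈ H)

def padLengths : AddSubmonoid ℕ where
  carrier := {G | ∀ s e, IsExit A H e →
    ∃ ψ : ℕ → ℕ, ψ s = e ∧ IsExit A H (ψ (s + G)) ∧ ChainOn (Hop A H) ψ s (s + G)}
  zero_mem' := fun s e he => ⟨fun _ => e, rfl, he, fun t h₁ h₂ => by omega⟩
  add_mem' := by
    intro G₁ G₂ h₁ h₂ s e he
    obtain ⟨ψ₁, hψ₁s, hψ₁e, hψ₁⟩ := h₁ s e he
    obtain ⟨ψ₂, hψ₂s, hψ₂e, hψ₂⟩ := h₂ (s + G₁) _ hψ₁e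
    rw [← add_assoc]
    refine ⟨_, by simp [hψ₁s], ?_, hψ₁.piecewise hψ₂ hψ₂s.symm⟩
    rwa [ite_le_eq_right hψ₂s.symm (by omega)]

variable {A H}

theorem IsRun.isExit {p q : ℕ} (hr : IsRun A H p q) : IsExit A H (q - 1) := by
  obtain ⟨hpq, hA, -, hq⟩ := hr
  exact ⟨hA ⟨by omega, by omega⟩, by rwa [Nat.sub_add_cancel (by omega)]⟩

/-- Sitting at the exit `e` until time `s`, jump to the start of the run and follow it to its
exit `q - 1`. -/
theorem IsRun.chainOn {p q e : ℕ} (hr : IsRun A H p q) (he : IsExit A H e) (s : ℕ) :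
    ChainOn (Hop A H) (fun t => if t ≤ s then e else p + (t - s - 1)) s (s + (q - p)) := by
  obtain ⟨hpq, hA, hp, -⟩ := hr
  intro t hst hts
  rcases hst.lt_or_eq with hlt | rfl
  · simp only [if_neg (not_le.2 hlt), if_neg (show ¬t + 1 ≤ s by omega)]
    exact ⟨hA ⟨by omega, by omega⟩, Or.inl (by omega)⟩
  · simp only [le_refl, if_true, if_neg (show ¬s + 1 ≤ s by omega)]
    exact ⟨he.1, Or.inr ⟨he.2, by simpa using hp⟩⟩

theorem IsRun.sub_mem_padLengths {p q : ℕ} (hr : IsRun A H p q) : q - p ∈ padLengths A H := by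
  intro s e he
  refine ⟨_, by simp, ?_, hr.chainOn he s⟩
  have := hr.1
  rw [if_neg (show ¬s + (q - p) ≤ s by omega), show p + (s + (q - p) - s - 1) = q - 1 by omega]
  exact hr.isExit

theorem IsExit.exists_chainOn_run {e s p q : ℕ} (he : IsExit A H e) (hr : IsRun A H p q)
    (hs : s < p) (hG : p - 1 - s ∈ padLengths A H) :
    ∃ ψ : ℕ → ℕ, ψ s = e ∧ ChainOn (Hop A H) ψ s (q - 1) ∧ ∀ t ∈ Ico p q, ψ t = t := by
  obtain ⟨ψ₁, hψ₁s, hψ₁e, hψ₁⟩ := hG s e he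
  rw [show s + (p - 1 - s) = p - 1 by omega] at hψ₁e hψ₁
  have hψ₂ := hr.chainOn hψ₁e (p - 1)
  rw [show p - 1 + (q - p) = q - 1 by have := hr.1; omega] at hψ₂
  refine ⟨_, ?_, hψ₁.piecewise hψ₂ (by simp), fun t ht => ?_⟩
  · simp [hψ₁s, show s ≤ p - 1 by omega]
  · obtain ⟨htp, -⟩ := ht
    simp only [if_neg (show ¬t ≤ p - 1 by omega)]
    omega

end Runs

section Reindex

variable {A H : Set ℕ}

theorem Thick.exists_isRun (hA : Thick A) {ι : Type*} {s : Finset ι} {U : ι → Set ℕ}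
    (hU : ∀ i, ∃ c ∈ s, i ∈ U c) (N : ℕ) :
    ∃ c ∈ s, ∃ p q, IsRun A (U c) p q ∧ N ≤ p ∧ N ≤ q - p := by
  obtain ⟨k, hk⟩ := hA (N + s.card * (N + 1) + 1)
  choose col hcol hmem using fun j : ℕ => hU (k + N + j * (N + 1))
  obtain ⟨i, hi, j, hj, hij, hcol_eq⟩ := Finset.exists_ne_map_eq_of_card_lt_of_maps_to
    (s := Finset.range (s.card + 1)) (t := s) (by simp) (fun j _ => hcol j)
  wlog hlt : i < j generalizing i j
  · exact this j hj i hi hij.symm hcol_eq.symm (by omega)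
  have hgap : i * (N + 1) + (N + 1) ≤ j * (N + 1) := by
    simpa [add_mul] using Nat.mul_le_mul_right (N + 1) hlt
  have hend : j * (N + 1) ≤ s.card * (N + 1) :=
    Nat.mul_le_mul_right _ (Nat.lt_succ_iff.1 (Finset.mem_range.1 hj))
  refine ⟨col i, hcol i, k + N + i * (N + 1), k + N + j * (N + 1),
    ⟨by omega, fun t ht => ?_, hmem i, hcol_eq ▸ hmem j⟩, by omega, by omega⟩
  obtain ⟨ht₁, ht₂⟩ := ht
  simpa [Nat.add_sub_cancel' (show k ≤ t by omega)] using hk (t - k) (by omega)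

/-- Restricting to runs whose endpoints have fixed residues modulo the length `ℓ` of one run
makes every long enough gap between two of them a sum of run lengths. -/
theorem exists_paddable_runs (h : ∀ N, ∃ p q, IsRun A H p q ∧ N ≤ p ∧ N ≤ q - p) :
    ∃ (P : ℕ → ℕ → Prop) (B : ℕ), (∀ N, ∃ p q, P p q ∧ N ≤ p ∧ N ≤ q - p) ∧
      (∀ p q, P p q → IsRun A H p q) ∧
      ∀ p q p' q', P p q → P p' q' → q + B ≤ p' → p' - q ∈ padLengths A H := by
  obtain ⟨p₀, q₀, hr₀, -, -⟩ := h 0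
  obtain ⟨ℓ, hℓm, hℓ⟩ : ∃ ℓ, ℓ ∈ padLengths A H ∧ 0 < ℓ :=
    ⟨_, hr₀.sub_mem_padLengths, Nat.sub_pos_of_lt hr₀.1⟩
  obtain ⟨⟨σ, τ⟩, -, hcls⟩ := Finset.exists_mem_forall_of_antitone
    (s := Finset.range ℓ ×ˢ Finset.range ℓ)
    (P := fun c N => ∃ p q, IsRun A H p q ∧ N ≤ p ∧ N ≤ q - p ∧ p % ℓ = c.1 ∧ q % ℓ = c.2)
    (fun _ _ _ hN ⟨p, q, hr, h₁, h₂, h₃⟩ => ⟨p, q, hr, hN.trans h₁, hN.trans h₂, h₃⟩)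
    (fun N => by
      obtain ⟨p, q, hr, h₁, h₂⟩ := h N
      exact ⟨(p % ℓ, q % ℓ), by simp [Nat.mod_lt _ hℓ], p, q, hr, h₁, h₂, rfl, rfl⟩)
  obtain ⟨p₁, q₁, hr₁, -, -, hp₁, hq₁⟩ := hcls 0
  refine ⟨fun p q => IsRun A H p q ∧ p % ℓ = σ ∧ q % ℓ = τ, ℓ * (q₁ - p₁), fun N => ?_,
    fun p q hpq => hpq.1, ?_⟩
  · obtain ⟨p, q, hr, h₁, h₂, hp, hq⟩ := hcls N
    exact ⟨p, q, ⟨hr, hp, hq⟩, h₁, h₂⟩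
  · rintro p q p' q' ⟨-, -, hq⟩ ⟨-, hp', -⟩ hle
    refine AddSubmonoid.mem_of_dvd_add hℓm hr₁.sub_mem_padLengths ?_ (by omega)
    exact Nat.dvd_sub_add_sub_of_modEq (hp'.trans hp₁.symm) (hq.trans hq₁.symm) (by omega)
      hr₁.1.le

theorem exists_seq_spaced_of_forall_exists {P : ℕ → ℕ → Prop}
    (hP : ∀ N, ∃ p q, P p q ∧ N ≤ p ∧ N ≤ q - p) (B : ℕ) :
    ∃ r : ℕ → ℕ × ℕ, ∀ m, P (r m).1 (r m).2 ∧ m ≤ (r m).2 - (r m).1 ∧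
      (r m).2 + B ≤ (r (m + 1)).1 := by
  choose p q hPpq hp hq using hP
  let N : ℕ → ℕ := fun m => Nat.rec (motive := fun _ => ℕ) 0 (fun m Nm => q Nm + B + m + 1) m
  have hN : ∀ m, m ≤ N m := fun m => by cases m <;> simp [N]
  exact ⟨fun m => (p (N m), q (N m)), fun m =>
    ⟨hPpq _, (hN m).trans (hq _), by have := hp (N (m + 1)); simp only [N] at this ⊢; omega⟩⟩

theorem exists_hop_reindex (h : ∀ N, ∃ p q, IsRun A H p q ∧ N ≤ p ∧ N ≤ q - p) :
    ∃ (φ : ℕ → ℕ) (t₀ : ℕ), (∀ t, t₀ ≤ t → Hop A H (φ t) (φ (t + 1))) ∧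
      Thick {t | t₀ ≤ t ∧ φ t = t} := by
  obtain ⟨P, B, hP, hPrun, hpad⟩ := exists_paddable_runs h
  obtain ⟨r, hr⟩ := exists_seq_spaced_of_forall_exists hP B
  have hrun : ∀ m, IsRun A H (r m).1 (r m).2 := fun m => hPrun _ _ (hr m).1
  have hstage : ∀ m, ∃ ψ : ℕ → ℕ, ψ ((r m).2 - 1) = (r m).2 - 1 ∧
      ChainOn (Hop A H) ψ ((r m).2 - 1) ((r (m + 1)).2 - 1) ∧
      ∀ t ∈ Ico (r (m + 1)).1 (r (m + 1)).2, ψ t = t := fun m => by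
    have := (hrun m).1
    have := (hr m).2.2
    refine (hrun m).isExit.exists_chainOn_run (hrun (m + 1)) (by omega) ?_
    rw [show (r (m + 1)).1 - 1 - ((r m).2 - 1) = (r (m + 1)).1 - (r m).2 by omega]
    exact hpad _ _ _ _ (hr m).1 (hr (m + 1)).1 (hr m).2.2
  choose ψ hψs hψ hψid using hstage
  have hT : StrictMono fun m => (r m).2 - 1 := strictMono_nat_of_lt_succ fun m => by
    have := (hrun m).1
    have := (hrun (m + 1)).1
    have := (hr m).2.2
    omega
  obtain ⟨φ, hφ, hφψ⟩ := exists_chain_of_chainOn_stages hT hψ fun m => by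
    rw [hψs, hψid m _ ⟨by have := (hrun (m + 1)).1; omega, by have := (hrun (m + 1)).1; omega⟩]
  refine ⟨φ, _, hφ, fun n => ⟨(r (n + 1)).1, fun i hi => ?_⟩⟩
  have := (hrun n).1
  have := (hr n).2.2
  have := (hr (n + 1)).2.1
  have := hT.monotone (Nat.zero_le n)
  refine ⟨by omega, ?_⟩
  rw [hφψ n _ (by omega) (by omega), hψid n _ ⟨by omega, by omega⟩]

end Reindex

section Dynamics

open scoped SetRel

variable {X : Type*} [UniformSpace X] {f : X → X} {V D : SetRel X X}

theorem Thick.exists_hub [CompactSpace X] {A : Set ℕ} (hA : Thick A) (x : ℕ → X)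
    (hV : V ∈ uniformity X) :
    ∃ c : X, ∀ N, ∃ p q, IsRun A {i | (x i, c) ∈ V} p q ∧ N ≤ p ∧ N ≤ q - p := by
  obtain ⟨C, hC, hcover⟩ := isCompact_univ.totallyBounded V hV
  have hH : ∀ i, ∃ c ∈ hC.toFinset, i ∈ {i | (x i, c) ∈ V} := fun i => by
    simpa using hcover (mem_univ (x i))
  obtain ⟨c, -, hc⟩ := Finset.exists_mem_forall_of_antitone
    (fun _ _ _ hN ⟨p, q, hr, h₁, h₂⟩ => ⟨p, q, hr, hN.trans h₁, hN.trans h₂⟩)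
    (hA.exists_isRun hH)
  exact ⟨c, hc⟩

theorem PseudoOrbitOn.mem_of_hop {x : ℕ → X} {A : Set ℕ} (hx : PseudoOrbitOn f V x A)
    (hV : V ∈ uniformity X) [V.IsSymm] (hVD : V ○ V ○ V ⊆ D) {c : X} {a b : ℕ}
    (hab : Hop A {i | (x i, c) ∈ V} a b) : (f (x a), x b) ∈ D := by
  obtain ⟨ha, rfl | ⟨h₁, h₂⟩⟩ := hab
  · exact hVD ⟨_, ⟨_, hx a ha, refl_mem_uniformity hV⟩, refl_mem_uniformity hV⟩
  · exact hVD ⟨c, ⟨x (a + 1), hx a ha, h₁⟩, SetRel.symm V h₂⟩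

theorem exists_pseudoOrbitOn_univ_of_surjective (hf : Surjective f) (hD : D ∈ uniformity X)
    {ζ : ℕ → X} {t₀ : ℕ} (hζ : ∀ t, t₀ ≤ t → (f (ζ t), ζ (t + 1)) ∈ D) :
    ∃ ξ : ℕ → X, PseudoOrbitOn f D ξ univ ∧ ∀ t, t₀ ≤ t → ξ t = ζ t := by
  obtain ⟨w, hw⟩ := hf.iterate t₀ (ζ t₀)
  refine ⟨fun t => if t < t₀ then f^[t] w else ζ t, fun t _ => ?_,
    fun t ht => if_neg (not_lt.2 ht)⟩
  rcases lt_trichotomy (t + 1) t₀ with h | h | h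
  · simp only [if_pos h, if_pos (show t < t₀ by omega), ← iterate_succ_apply' f]
    exact refl_mem_uniformity hD
  · subst h
    simp only [lt_add_one, if_true, lt_irrefl, if_false, ← iterate_succ_apply' f, hw]
    exact refl_mem_uniformity hD
  · simp only [if_neg (show ¬t < t₀ by omega), if_neg (show ¬t + 1 < t₀ by omega)]
    exact hζ t (by omega)

end Dynamics

theorem fgShadowing_thick_of_shadowing_general
    {X : Type*} [UniformSpace X] [CompactSpace X]
    (f : X → X) (hsurj : Function.Surjective f)
    (hsh : TopShadowing f) :
    FGShadowing f thickFamily thickFamily := by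
  intro E hE
  obtain ⟨D, hD, hshadow⟩ := hsh E hE
  obtain ⟨V, hV, hVsymm, hVD⟩ := comp_comp_symm_mem_uniformity_sets hD
  refine ⟨V, hV, ?_⟩
  rintro x ⟨A, hA, hx⟩
  obtain ⟨c, hc⟩ := Thick.exists_hub hA x hV
  obtain ⟨φ, t₀, hφ, hthick⟩ := exists_hop_reindex hc
  obtain ⟨ξ, hξ, hξφ⟩ := exists_pseudoOrbitOn_univ_of_surjective hsurj hD
    fun t ht => hx.mem_of_hop hV hVD (hφ t ht)
  obtain ⟨y, hy⟩ := hshadow ξ hξ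
  refine ⟨y, _, hthick, fun t ⟨ht, hφt⟩ => ?_⟩
  simpa [hξφ t ht, hφt] using hy t (mem_univ t)

/-- topological shadowing implies topological (F_t, F_t)-shadowing. -/
theorem fgShadowing_thick_of_shadowing
    {X : Type*} [UniformSpace X] [CompactSpace X]
    (f : X → X) (hf : Continuous f) (hsurj : Function.Surjective f)
    (hsh : TopShadowing f) :
    FGShadowing f thickFamily thickFamily :=
  fgShadowing_thick_of_shadowing_general f hsurj hsh
end

section
/- Let (X, f) be a dynamical system, where X is a compact uniform space and f : X → X is a continuous surjection, and suppose f is chain recurrent, i.e., CR(f) = X. Then the following are equivalent: (1) f has topological shadowing; (2) f has topological (𝒟, F_t)-shadowing; (3) f has topological (F_t, F_t)-shadowing; (4) f has topological (ℕ, F_t)-shadowing, where in (4) the first family is the family {ℕ} of sets containing all of ℕ (equivalently, full pseudo orbits). -/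
open Filter Set Function

/-!
Chain recurrence lets every sufficiently fine chain be reversed, and the lengths of `D`-loops at a
point are eventually exactly the multiples of their gcd `m`.

(ℕ, thick)-shadowing ⇒ shadowing: a finite pseudo orbit closes up into a periodic one; tracing
that on a thick set traces the original segment from a suitable iterate, and compactness turns
tracing of all finite segments into tracing.

Shadowing ⇒ (thick, thick)-shadowing: choose ever longer blocks of the pseudo orbit whose starting
points lie near one point `v` and are congruent modulo the loop period at `v`. The gap after each
block is then bridged by a chain of exactly the right length (reverse the block, then run a loop
near `v`), and the resulting pseudo orbit is shadowed.

Density-one sets are thick and `ℕ` has density one, which closes the cycle.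
-/

open scoped Uniformity SetRel

section Chains

variable {X : Type*} {f : X → X} {D D' D₁ : Set (X × X)} {n m : ℕ} {x y z : X}

theorem PseudoOrbitOn.mono {c : ℕ → X} {A B : Set ℕ} (h : PseudoOrbitOn f D c A) (hD : D ⊆ D')
    (hB : B ⊆ A) : PseudoOrbitOn f D' c B :=
  fun i hi => hD (h i (hB hi))

def ChainOfLength (f : X → X) (D : Set (X × X)) (n : ℕ) (x y : X) : Prop :=
  ∃ c : ℕ → X, c 0 = x ∧ c n = y ∧ PseudoOrbitOn f D c (Iio n)

namespace ChainOfLength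

theorem refl (x : X) : ChainOfLength f D 0 x x :=
  ⟨fun _ => x, rfl, rfl, fun _ hi => absurd hi (Nat.not_lt_zero _)⟩

theorem mono (h : ChainOfLength f D n x y) (hD : D ⊆ D') : ChainOfLength f D' n x y :=
  let ⟨c, h0, hn, hc⟩ := h
  ⟨c, h0, hn, hc.mono hD subset_rfl⟩

theorem single (h : (f x, y) ∈ D) : ChainOfLength f D 1 x y :=
  ⟨fun i => if i = 0 then x else y, rfl, rfl, fun i hi => by
    obtain rfl : i = 0 := by simpa using hi
    exact h⟩

end ChainOfLength

theorem PseudoOrbitOn.chainOfLength {c : ℕ → X} {k : ℕ} (h : PseudoOrbitOn f D c (Ico k (k + n))) :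
    ChainOfLength f D n (c k) (c (k + n)) :=
  ⟨fun i => c (k + i), rfl, rfl, fun i hi => h (k + i) ⟨by omega, by simp at hi; omega⟩⟩

theorem PseudoOrbitOn.exists_extend {c : ℕ → X} (hc : PseudoOrbitOn f D c (Iio n))
    (h : ChainOfLength f D m (c n) y) :
    ∃ c' : ℕ → X, (∀ i ≤ n, c' i = c i) ∧ c' (n + m) = y ∧ PseudoOrbitOn f D c' (Iio (n + m)) := by
  obtain ⟨d, hd0, hdm, hd⟩ := h
  have hc' : ∀ i, n ≤ i → (if i < n then c i else d (i - n)) = d (i - n) :=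
    fun i hi => if_neg (not_lt.2 hi)
  refine ⟨fun i => if i < n then c i else d (i - n), fun i hi => ?_, ?_, fun i hi => ?_⟩
  · rcases hi.lt_or_eq with hi | rfl
    · exact if_pos hi
    · simp [hd0]
  · simp [hdm]
  · simp only [mem_Iio] at hi
    rcases lt_or_ge i n with hin | hin
    · rcases (show i + 1 ≤ n by omega).lt_or_eq with hin' | hin'
      · simpa [hin, hin'] using hc i hin
      · simpa [hin, hin', hd0] using hc i hin
    · dsimp only
      rw [hc' i hin, hc' (i + 1) (by omega), show i + 1 - n = i - n + 1 by omega]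
      exact hd (i - n) (by simp; omega)

namespace ChainOfLength

theorem append (h₁ : ChainOfLength f D n x y) (h₂ : ChainOfLength f D m y z) :
    ChainOfLength f D (n + m) x z := by
  obtain ⟨c, rfl, rfl, hc⟩ := h₁
  obtain ⟨c', hc'c, hc'm, hc'⟩ := hc.exists_extend h₂
  exact ⟨c', hc'c 0 (Nat.zero_le n), hc'm, hc'⟩

theorem succ_iff : ChainOfLength f D (n + 1) x z ↔ ∃ y, (f x, y) ∈ D ∧ ChainOfLength f D n y z := by
  refine ⟨fun ⟨c, h0, hn, hc⟩ => ⟨c 1, h0 ▸ hc 0 (by simp), fun i => c (i + 1), rfl, hn,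
    fun i hi => hc (i + 1) (by simp at hi ⊢; omega)⟩, fun ⟨y, hy, h⟩ => ?_⟩
  simpa [add_comm] using (single hy).append h

theorem succ_iff' : ChainOfLength f D (n + 1) x z ↔ ∃ y, ChainOfLength f D n x y ∧ (f y, z) ∈ D :=
  ⟨fun ⟨c, h0, hn, hc⟩ => ⟨c n, ⟨c, h0, rfl, fun i hi => hc i (by simp at hi ⊢; omega)⟩,
    hn ▸ hc n (by simp)⟩, fun ⟨_, h, hy⟩ => h.append (single hy)⟩

theorem replace_head [SetRel.IsRefl D₁] {x' : X} (h : ChainOfLength f D (n + 1) x y)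
    (hx : (f x', f x) ∈ D₁) : ChainOfLength f (D₁ ○ D) (n + 1) x' y := by
  obtain ⟨z, hz, h⟩ := succ_iff.1 h
  exact succ_iff.2 ⟨z, ⟨f x, hx, hz⟩, h.mono SetRel.right_subset_comp⟩

theorem replace_last [SetRel.IsRefl D₁] {y' : X} (h : ChainOfLength f D (n + 1) x y)
    (hy : (y, y') ∈ D₁) : ChainOfLength f (D ○ D₁) (n + 1) x y' := by
  obtain ⟨z, h, hz⟩ := succ_iff'.1 h
  exact succ_iff'.2 ⟨z, h.mono SetRel.left_subset_comp, ⟨y, hz, hy⟩⟩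

theorem replace_ends [SetRel.IsRefl D] {u w : X} (h : ChainOfLength f D n x y) (hn : 0 < n)
    (hu : (f u, f x) ∈ D) (hw : (y, w) ∈ D) : ChainOfLength f (D ○ (D ○ D)) n u w := by
  obtain ⟨n, rfl⟩ := Nat.exists_eq_add_of_lt hn
  simpa [SetRel.comp_assoc] using ((h.replace_head hu).replace_last hw)

end ChainOfLength

end Chains

section ChainRecurrent

variable {X : Type*} [UniformSpace X] {f : X → X} {D : Set (X × X)} {x : X}

def loopLengths (f : X → X) (D : Set (X × X)) (x : X) : AddSubmonoid ℕ where
  carrier := {n | ChainOfLength f D n x x}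
  zero_mem' := ChainOfLength.refl x
  add_mem' := ChainOfLength.append

theorem chainOfLength_of_mem_CR (hx : x ∈ CR f) (hD : D ∈ 𝓤 X) :
    ∃ n, 0 < n ∧ ChainOfLength f D n x x :=
  let ⟨n, hn, c, h0, hc, hs⟩ := hx D hD
  ⟨n, hn, c, h0, hc, fun i hi => hs i hi⟩

theorem exists_loop_period (hx : x ∈ CR f) (hD : D ∈ 𝓤 X) :
    ∃ m, 0 < m ∧ (∀ l, ChainOfLength f D l x x → m ∣ l) ∧
      ∃ N, ∀ l, N ≤ l → m ∣ l → ChainOfLength f D l x x := by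
  set S := loopLengths f D x
  obtain ⟨n, hn, hloop⟩ := chainOfLength_of_mem_CR hx hD
  have hm : Nat.setGcd S ≠ 0 := fun h => hn.ne' (Nat.setGcd_eq_zero_iff.1 h hloop)
  obtain ⟨N, hN⟩ := Nat.exists_mem_closure_of_ge (S : Set ℕ)
  refine ⟨_, Nat.pos_of_ne_zero hm, fun l hl => Nat.setGcd_dvd_of_mem hl, N, fun l hl hdvd => ?_⟩
  have := hN l hl hdvd
  rwa [AddSubmonoid.closure_eq] at this

variable [CompactSpace X]

theorem exists_reverse_step (hf : Continuous f) (hcr : CR f = univ) (hD : D ∈ 𝓤 X) :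
    ∃ D' ∈ 𝓤 X, ∀ a b, (f a, b) ∈ D' → ∃ m, ChainOfLength f D m b a := by
  obtain ⟨D₁, hD₁, hD₁D⟩ := comp_mem_uniformity_sets hD
  have := isRefl_of_mem_uniformity hD₁
  obtain ⟨V, hV, hVsymm, hVV⟩ :=
    comp_symm_mem_uniformity_sets (CompactSpace.uniformContinuous_of_continuous hf hD₁)
  refine ⟨V ∩ D₁, inter_mem hV hD₁, fun a b hab => ?_⟩
  obtain ⟨n, hn, hloop⟩ := chainOfLength_of_mem_CR (hcr.ge (mem_univ a)) (inter_mem hV hD₁)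
  -- going twice around the loop at `a` makes the part after its first step nonempty
  obtain ⟨c, hac, hca⟩ := ChainOfLength.succ_iff.1
    (show ChainOfLength f (V ∩ D₁) (n - 1 + n + 1) a a by
      simpa [show n - 1 + n + 1 = n + n by omega] using hloop.append hloop)
  obtain ⟨k, hk⟩ := Nat.exists_eq_add_of_lt (show 0 < n - 1 + n by omega)
  have hbc : (f b, f c) ∈ D₁ := hVV (show (b, c) ∈ V ○ V from ⟨f a, hVsymm.symm _ _ hab.1, hac.1⟩)
  refine ⟨n - 1 + n, ?_⟩
  rw [hk] at hca ⊢
  exact ((hca.mono inter_subset_right).replace_head hbc).mono hD₁D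

theorem exists_reverse_chain (hf : Continuous f) (hcr : CR f = univ) (hD : D ∈ 𝓤 X) :
    ∃ D' ∈ 𝓤 X, D' ⊆ D ∧ ∀ n a b, ChainOfLength f D' n a b → ∃ m, ChainOfLength f D m b a := by
  obtain ⟨D', hD', hrev⟩ := exists_reverse_step hf hcr hD
  refine ⟨D' ∩ D, inter_mem hD' hD, inter_subset_right, fun n => ?_⟩
  induction n with
  | zero => rintro a b ⟨c, rfl, rfl, -⟩; exact ⟨0, ChainOfLength.refl _⟩
  | succ n ih =>
    intro a b h
    obtain ⟨a₁, ha₁, h⟩ := ChainOfLength.succ_iff.1 h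
    obtain ⟨m₁, h₁⟩ := ih a₁ b h
    obtain ⟨m₂, h₂⟩ := hrev a a₁ ha₁.1
    exact ⟨m₁ + m₂, h₁.append h₂⟩

end ChainRecurrent

theorem Thick.exists_Ico_subset {A : Set ℕ} (hA : Thick A) (n K : ℕ) :
    ∃ s, K ≤ s ∧ Ico s (s + n) ⊆ A := by
  obtain ⟨k, hk⟩ := hA (K + n)
  refine ⟨k + K, Nat.le_add_left K k, fun i hi => ?_⟩
  simp only [mem_Ico] at hi
  simpa [show k + (i - k) = i by omega] using hk (i - k) (by omega)

theorem exists_mem_forall_of_antitone {α : Type*} {F : Set α} (hF : F.Finite)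
    {P : ℕ → α → Prop} (hP : ∀ a, Antitone (P · a)) (h : ∀ n, ∃ a ∈ F, P n a) :
    ∃ a ∈ F, ∀ n, P n a := by
  by_contra! hne
  have hev : ∀ a ∈ F, ∀ᶠ n in atTop, ¬P n a := fun a ha =>
    let ⟨n, hn⟩ := hne a ha
    eventually_atTop.2 ⟨n, fun _ hm hPm => hn (hP a hm hPm)⟩
  obtain ⟨n, hn⟩ := ((eventually_all_finite hF).2 hev).exists
  obtain ⟨a, ha, hPa⟩ := h n
  exact hn a ha hPa

theorem Thick.exists_blocks_near {X : Type*} {A : Set ℕ} (hA : Thick A) {D : Set (X × X)}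
    {C : Set X} (hC : C.Finite) (hcover : univ ⊆ ⋃ v ∈ C, {y | (y, v) ∈ D}) (x : ℕ → X)
    {m : X → ℕ} (hm : ∀ v, 0 < m v) :
    ∃ v r, ∀ n K, ∃ s, K ≤ s ∧ Ico s (s + n) ⊆ A ∧ (x s, v) ∈ D ∧ s % m v = r := by
  let P : ℕ → X × ℕ → Prop := fun n c =>
    ∃ s, n ≤ s ∧ Ico s (s + n) ⊆ A ∧ (x s, c.1) ∈ D ∧ s % m c.1 = c.2
  have hP : ∀ c, Antitone (P · c) := fun c n n' hnn' ⟨s, hs, hsA, hsD, hsm⟩ =>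
    ⟨s, hnn'.trans hs, (Ico_subset_Ico_right (by omega)).trans hsA, hsD, hsm⟩
  have hF : (⋃ v ∈ C, {v} ×ˢ Iio (m v)).Finite :=
    hC.biUnion fun v _ => (finite_singleton v).prod (finite_Iio _)
  obtain ⟨⟨v, r⟩, -, hvr⟩ := exists_mem_forall_of_antitone hF hP fun n => by
    obtain ⟨s, hs, hsA⟩ := hA.exists_Ico_subset n n
    obtain ⟨v, hv, hsv⟩ := mem_iUnion₂.1 (hcover (mem_univ (x s)))
    exact ⟨(v, s % m v), mem_biUnion hv ⟨rfl, Nat.mod_lt _ (hm v)⟩, s, hs, hsA, hsv, rfl⟩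
  refine ⟨v, r, fun n K => ?_⟩
  obtain ⟨s, hs, hsA, hsv, hsr⟩ := hvr (max n K)
  exact ⟨s, (le_max_right n K).trans hs,
    (Ico_subset_Ico_right (by omega)).trans hsA, hsv, hsr⟩

theorem exists_seq_of_forall_exists_ge {G : ℕ → ℕ → Prop} (hG : ∀ n K, ∃ s, K ≤ s ∧ G n s)
    (bound : ℕ → ℕ → ℕ) :
    ∃ k : ℕ → ℕ, 0 < k 0 ∧ ∀ j, G (j + 1) (k j) ∧ bound j (k j) ≤ k (j + 1) := by
  choose s hs hGs using hG
  refine ⟨fun j => Nat.rec (s 1 1) (fun j kj => s (j + 2) (bound j kj)) j,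
    Nat.one_pos.trans_le (hs 1 1),
    fun j => ⟨?_, hs _ _⟩⟩
  cases j <;> exact hGs _ _

section Glue

variable {X : Type*} {f : X → X} {D : Set (X × X)}

theorem exists_pseudoOrbitOn_glue {p : ℕ → ℕ} (hp : StrictMono p) (hp0 : p 0 = 0)
    {c : ℕ → ℕ → X} (hc : ∀ j, PseudoOrbitOn f D (c j) (Iio (p (j + 1) - p j)))
    (hend : ∀ j, c j (p (j + 1) - p j) = c (j + 1) 0) :
    ∃ z : ℕ → X, PseudoOrbitOn f D z univ ∧ ∀ j, ∀ i < p (j + 1) - p j, z (p j + i) = c j i := by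
  classical
  have hex : ∀ i, ∃ j, i < p (j + 1) := fun i => ⟨i, (Nat.lt_succ_self i).trans_le (hp.id_le _)⟩
  let J : ℕ → ℕ := fun i => Nat.find (hex i)
  have hJ : ∀ {i j}, p j ≤ i → i < p (j + 1) → J i = j := fun h1 h2 =>
    (Nat.find_eq_iff _).2 ⟨h2, fun n hn => not_lt.2 ((hp.monotone (by omega)).trans h1)⟩
  have hJi : ∀ i, p (J i) ≤ i ∧ i < p (J i + 1) := by
    intro i
    refine ⟨?_, Nat.find_spec (hex i)⟩
    rcases hi : J i with _ | j
    · simp [hp0]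
    · exact not_lt.1 (Nat.find_min (hex i) (show j < J i by omega))
  refine ⟨fun i => c (J i) (i - p (J i)), fun i _ => ?_, fun j i hi => ?_⟩
  · obtain ⟨h1, h2⟩ := hJi i
    have hnext : c (J (i + 1)) (i + 1 - p (J (i + 1))) = c (J i) (i - p (J i) + 1) := by
      rcases (Nat.succ_le_of_lt h2).lt_or_eq with h | h
      · rw [hJ (by omega) h, show i + 1 - p (J i) = i - p (J i) + 1 by omega]
      · rw [hJ h.ge (h ▸ hp (Nat.lt_succ_self _)), ← h, Nat.sub_self, ← hend,
          show p (J i + 1) - p (J i) = i - p (J i) + 1 by omega]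
    simp only
    rw [hnext]
    exact hc _ _ (by simp; omega)
  · simp only
    rw [hJ (j := j) (by omega) (by omega), Nat.add_sub_cancel_left]

theorem pseudoOrbitOn_univ_of_periodic {c : ℕ → X} {p : ℕ} (hp : 0 < p)
    (hc : PseudoOrbitOn f D c (Iio p)) (hper : c p = c 0) :
    PseudoOrbitOn f D (fun i => c (i % p)) univ := by
  intro i _
  have hstep := hc (i % p) (Nat.mod_lt i hp)
  simp only
  rw [← Nat.mod_add_mod i p 1]
  rcases (show i % p + 1 ≤ p from Nat.mod_lt i hp).lt_or_eq with h | h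
  · rwa [Nat.mod_eq_of_lt h]
  · rw [h, Nat.mod_self, ← hper]
    rwa [h] at hstep

end Glue

section Density

open Finset in
theorem card_filter_range_mul_le {A : Set ℕ} [DecidablePred (· ∈ A)] {n : ℕ}
    (h : ∀ k, ∃ i < n, k + i ∉ A) (q : ℕ) : #{i ∈ range (q * n) | i ∈ A} ≤ q * (n - 1) := by
  induction q with
  | zero => simp
  | succ q ih =>
    obtain ⟨i, hi, hiA⟩ := h (q * n)
    have hwindow : #{j ∈ range n | q * n + j ∈ A} ≤ n - 1 := by
      calc #{j ∈ range n | q * n + j ∈ A} ≤ #((range n).erase i) :=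
            card_le_card fun j hj => by
              simp only [mem_filter, mem_erase] at hj ⊢
              exact ⟨fun hji => hiA (hji ▸ hj.2), hj.1⟩
        _ = n - 1 := by rw [card_erase_of_mem (mem_range.2 hi), card_range]
    rw [add_one_mul, card_filter, sum_range_add, ← card_filter, ← card_filter, add_one_mul]
    omega

theorem lowerDensity_univ : lowerDensity (univ : Set ℕ) = 1 := by
  have h : ∀ᶠ n : ℕ in atTop, (n : ℝ) / n = 1 :=
    (eventually_gt_atTop 0).mono fun n hn => div_self (by positivity)
  simp only [lowerDensity, mem_univ, Finset.filter_true, Finset.card_range]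
  rw [liminf_congr h, liminf_const]

open scoped Classical in
theorem thick_of_lowerDensity_eq_one {A : Set ℕ} (hA : lowerDensity A = 1) : Thick A := by
  by_contra hthick
  obtain ⟨n, hn⟩ : ∃ n, ∀ k, ∃ i < n, k + i ∉ A := by simpa [Thick] using hthick
  have hn0 : 0 < n := Nat.pos_of_ne_zero fun h0 => by simpa [h0] using hn 0
  have hle : lowerDensity A ≤ 1 - 1 / n := by
    refine liminf_le_of_frequently_le (frequently_atTop.2 fun N => ⟨(N + 1) * n, ?_, ?_⟩)
      (isBoundedUnder_of ⟨0, fun _ => by positivity⟩)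
    · nlinarith
    · have hcount : (((Finset.range ((N + 1) * n)).filter (· ∈ A)).card : ℝ) ≤
          (N + 1) * ((n : ℝ) - 1) := by
        have := Nat.cast_le (α := ℝ).2 (card_filter_range_mul_le hn (N + 1))
        rwa [Nat.cast_mul, Nat.cast_sub hn0, Nat.cast_succ, Nat.cast_one] at this
      rw [div_le_iff₀ (by positivity)]
      calc _ ≤ (N + 1) * ((n : ℝ) - 1) := hcount
        _ = (1 - 1 / n) * ((N + 1) * n : ℕ) := by push_cast; field_simp
  have : (0 : ℝ) < 1 / n := by positivity
  linarith

end Density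

section Shadowing

variable {X : Type*} [UniformSpace X] {f : X → X} {E : Set (X × X)}

theorem FGShadowing.mono {F F' G G' : Set (Set ℕ)} (h : FGShadowing f F G) (hF : F' ⊆ F)
    (hG : G ⊆ G') : FGShadowing f F' G' := fun E hE =>
  let ⟨D, hD, hDE⟩ := h E hE
  ⟨D, hD, fun x ⟨A, hA, hx⟩ =>
    let ⟨y, B, hB, hy⟩ := hDE x ⟨A, hF hA, hx⟩
    ⟨y, B, hG hB, hy⟩⟩

theorem exists_tracedOn_univ_of_forall_Iic [CompactSpace X] (hf : Continuous f)
    (hE : IsClosed E) {x : ℕ → X} (h : ∀ n, ∃ y, TracedOn f E x y (Iic n)) :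
    ∃ y, TracedOn f E x y univ := by
  let K : ℕ → Set X := fun n => ⋂ i ∈ Iic n, (fun y => (f^[i] y, x i)) ⁻¹' E
  have hK : ∀ n, IsClosed (K n) := fun n =>
    isClosed_biInter fun i _ => hE.preimage ((hf.iterate i).prodMk continuous_const)
  have hKmem : ∀ {n y}, y ∈ K n ↔ TracedOn f E x y (Iic n) := by simp [K, TracedOn]
  obtain ⟨y, hy⟩ := IsCompact.nonempty_iInter_of_sequence_nonempty_isCompact_isClosed K
    (fun n y hy => hKmem.2 fun i hi => hKmem.1 hy i (mem_Iic.2 ((mem_Iic.1 hi).trans n.le_succ)))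
    (fun n => (h n).imp fun _ => hKmem.2) (hK 0).isCompact hK
  exact ⟨y, fun i _ => hKmem.1 (mem_iInter.1 hy i) i (mem_Iic.2 le_rfl)⟩

variable [CompactSpace X]

theorem exists_tracedOn_Iic_of_fgShadowing_univ (hf : Continuous f) (hcr : CR f = univ)
    (h : FGShadowing f {univ} thickFamily) (hE : E ∈ 𝓤 X) :
    ∃ D ∈ 𝓤 X, ∀ x, PseudoOrbitOn f D x univ → ∀ n, ∃ y, TracedOn f E x y (Iic n) := by
  obtain ⟨D₁, hD₁, htrace⟩ := h E hE
  obtain ⟨D, hD, hDD₁, hrev⟩ := exists_reverse_chain hf hcr hD₁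
  refine ⟨D, hD, fun x hx n => ?_⟩
  -- close `x 0, …, x (n + 1)` up into a periodic pseudo orbit of period `p`
  have hchain : ChainOfLength f D (n + 1) (x 0) (x (n + 1)) := by
    simpa using (hx.mono subset_rfl (subset_univ _)).chainOfLength (k := 0)
  obtain ⟨m, hm⟩ := hrev _ _ _ hchain
  obtain ⟨c, hcx, hcp, hc⟩ := (hx.mono hDD₁ (subset_univ _)).exists_extend hm
  set p := n + 1 + m
  have hp : 0 < p := by omega
  obtain ⟨y, B, hB, hy⟩ := htrace (fun i => c (i % p))
    ⟨univ, rfl, pseudoOrbitOn_univ_of_periodic hp hc (by rw [hcp, hcx 0 (Nat.zero_le _)])⟩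
  obtain ⟨s, hs⟩ := hB (p + p)
  -- the multiple `a` of `p` lies in `(s, s + p]`, so `[a, a + n]` lies in the block at `s`
  set a := p * (s / p + 1)
  have hsa : s < a := Nat.lt_mul_div_succ s hp
  have has : a ≤ s + p := by
    have := Nat.mul_div_le s p
    simp only [a, mul_add, mul_one]
    omega
  refine ⟨f^[a] y, fun i hi => ?_⟩
  have hi' : i < p := by simp at hi; omega
  have hiB : a + i ∈ B := by
    simpa [show s + (a + i - s) = a + i by omega] using hs (a + i - s) (by omega)
  have hz : c ((a + i) % p) = x i := by
    rw [Nat.mul_add_mod, Nat.mod_eq_of_lt hi', hcx i (by simp at hi; omega)]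
  rw [← iterate_add_apply, add_comm i, ← hz]
  exact hy (a + i) hiB

theorem topShadowing_of_fgShadowing_univ (hf : Continuous f) (hcr : CR f = univ)
    (h : FGShadowing f {univ} thickFamily) : TopShadowing f := by
  intro E hE
  obtain ⟨E', ⟨hE', hE'cl⟩, hE'E⟩ := uniformity_hasBasis_closed.mem_iff.1 hE
  obtain ⟨D, hD, hfin⟩ := exists_tracedOn_Iic_of_fgShadowing_univ hf hcr h hE'
  refine ⟨D, hD, fun x hx => ?_⟩
  obtain ⟨y, hy⟩ := exists_tracedOn_univ_of_forall_Iic hf hE'cl (hfin x hx)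
  exact ⟨y, fun i hi => hE'E (hy i hi)⟩

end Shadowing

section ThickShadowing

variable {X : Type*} {f : X → X} {D E : Set (X × X)}

theorem exists_tracedOn_thick_of_blocks [SetRel.IsRefl D] (hsurj : Surjective f)
    (htrace : ∀ z, PseudoOrbitOn f D z univ → ∃ y, TracedOn f E z y univ)
    {x : ℕ → X} {k : ℕ → ℕ} (hk0 : 0 < k 0)
    (hblock : ∀ j, PseudoOrbitOn f D x (Ico (k j) (k j + (j + 1))))
    (hgap : ∀ j, k j + (j + 1) ≤ k (j + 1))
    (hconn : ∀ j, ChainOfLength f D (k (j + 1) - (k j + (j + 1)))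
      (x (k j + (j + 1))) (x (k (j + 1)))) :
    ∃ y, ∃ B ∈ thickFamily, TracedOn f E x y B := by
  obtain ⟨w, hw⟩ := hsurj.iterate (k 0) (x (k 0))
  have hseg : ∀ j, ∃ σ : ℕ → X, (∀ i ≤ j + 1, σ i = x (k j + i)) ∧
      σ (k (j + 1) - k j) = x (k (j + 1)) ∧ PseudoOrbitOn f D σ (Iio (k (j + 1) - k j)) := by
    intro j
    have hx : PseudoOrbitOn f D (fun i => x (k j + i)) (Iio (j + 1)) :=
      fun i hi => hblock j (k j + i) ⟨by omega, by simp at hi; omega⟩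
    obtain ⟨σ, hσx, hσend, hσ⟩ := hx.exists_extend (hconn j)
    rw [show j + 1 + (k (j + 1) - (k j + (j + 1))) = k (j + 1) - k j by have := hgap j; omega]
      at hσend hσ
    exact ⟨σ, hσx, hσend, hσ⟩
  choose σ hσx hσend hσ using hseg
  -- segment `0` is an exact orbit ending at `x (k 0)`, segment `j + 1` starts at `k j`
  let p : ℕ → ℕ := fun j => Nat.casesOn j 0 k
  let c : ℕ → ℕ → X := fun j => Nat.casesOn j (fun i => f^[i] w) σ
  have hp : StrictMono p := strictMono_nat_of_lt_succ fun j => by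
    cases j with
    | zero => exact hk0
    | succ j => have := hgap j; exact (show k j < k (j + 1) by omega)
  obtain ⟨z, hz, hzc⟩ := exists_pseudoOrbitOn_glue (f := f) (D := D) hp rfl (c := c)
    (fun j => by
      cases j with
      | zero => exact fun i _ => by simpa [c, iterate_succ_apply'] using SetRel.refl D (f^[i + 1] w)
      | succ j => exact hσ j)
    (fun j => by
      cases j with
      | zero => simpa [p, c, hw] using (hσx 0 0 (Nat.zero_le _)).symm
      | succ j => exact (hσend j).trans (by simpa using (hσx (j + 1) 0 (Nat.zero_le _)).symm))
  obtain ⟨y, hy⟩ := htrace z hz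
  refine ⟨y, ⋃ j, Ico (k j) (k j + (j + 1)),
    fun n => ⟨k n, fun i hi => mem_iUnion.2 ⟨n, by simp; omega⟩⟩, ?_⟩
  intro i hi
  obtain ⟨j, hij⟩ := mem_iUnion.1 hi
  simp only [mem_Ico] at hij
  have := hzc (j + 1) (i - k j) (by have := hgap j; simp [p]; omega)
  have hzi : z i = x i := by
    simpa [p, c, show k j + (i - k j) = i by omega, hσx j (i - k j) (by omega)] using this
  simpa [hzi] using hy i (mem_univ i)

theorem chainOfLength_of_block_near_loop {D₀ D₁ D₂ : Set (X × X)} [SetRel.IsRefl D₁]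
    [SetRel.IsRefl D₂] (h₁₀ : D₁ ○ (D₁ ○ D₁) ⊆ D₀) (h₂₁ : D₂ ○ (D₂ ○ D₂) ⊆ D₁)
    {v a e b : X} {m N n R ℓ : ℕ}
    (hdvd : ∀ l, ChainOfLength f D₁ l v v → m ∣ l)
    (hloop : ∀ l, N ≤ l → m ∣ l → ChainOfLength f D₁ l v v)
    (hn : 0 < n) (hblock : ChainOfLength f D₂ n a e) (hrev : ChainOfLength f D₂ R e a)
    (hav : (a, v) ∈ D₂) (hfav : (f a, f v) ∈ D₂) (hfva : (f v, f a) ∈ D₂)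
    (hvb : (v, b) ∈ D₂) (hℓ : R + N + 1 ≤ ℓ) (hmℓ : m ∣ n + ℓ) :
    ChainOfLength f D₀ ℓ e b := by
  have h₂₁' : D₂ ⊆ D₁ := SetRel.left_subset_comp.trans h₂₁
  have h₁₀' : D₁ ⊆ D₀ := SetRel.left_subset_comp.trans h₁₀
  -- the block followed by its reversal is a loop at `a`, hence moves to a loop at `v`
  have hmR : m ∣ n + R :=
    hdvd _ (((hblock.append hrev).replace_ends (by omega) hfva hav).mono h₂₁)
  obtain ⟨t, rfl⟩ : ∃ t, ℓ = R + t := ⟨ℓ - R, by omega⟩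
  have hmt : m ∣ t := by simpa [show n + (R + t) - (n + R) = t by omega] using Nat.dvd_sub hmℓ hmR
  have hbridge := ((hloop t (by omega) hmt).replace_ends (by omega) (h₂₁' hfav) (h₂₁' hvb)).mono h₁₀
  exact (hrev.mono (h₂₁'.trans h₁₀')).append hbridge

variable [UniformSpace X] [CompactSpace X]

theorem TopShadowing.fgShadowing_thickFamily (hf : Continuous f) (hsurj : Surjective f)
    (hcr : CR f = univ) (h : TopShadowing f) : FGShadowing f thickFamily thickFamily := by
  intro E hE
  obtain ⟨D₀, hD₀, htrace⟩ := h E hE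
  obtain ⟨D₁, hD₁, h₁₀⟩ := comp3_mem_uniformity hD₀
  obtain ⟨D₂, hD₂, h₂₁⟩ := comp3_mem_uniformity hD₁
  obtain ⟨D₃, hD₃, h₃₂, hrev⟩ := exists_reverse_chain hf hcr hD₂
  have := isRefl_of_mem_uniformity hD₀
  have := isRefl_of_mem_uniformity hD₁
  have := isRefl_of_mem_uniformity hD₂
  let D := SetRel.symmetrize (D₃ ∩ (fun q => (f q.1, f q.2)) ⁻¹' D₂)
  have hD : D ∈ 𝓤 X := symmetrize_mem_uniformity
    (inter_mem hD₃ (CompactSpace.uniformContinuous_of_continuous hf hD₂))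
  have hDD₂ : D ⊆ D₂ := fun q hq => h₃₂ hq.1.1
  have hDD₀ : D ⊆ D₀ :=
    hDD₂.trans ((SetRel.left_subset_comp.trans h₂₁).trans (SetRel.left_subset_comp.trans h₁₀))
  choose m hm hdvd N hloop using fun v => exists_loop_period (hcr.ge (mem_univ v)) hD₁
  obtain ⟨C, hC, hcover⟩ := isCompact_univ.totallyBounded D hD
  refine ⟨D, hD, ?_⟩
  rintro x ⟨A, hA, hx⟩
  have hxA : ∀ {s n}, Ico s (s + n) ⊆ A → ChainOfLength f D n (x s) (x (s + n)) :=
    fun hs => (hx.mono subset_rfl hs).chainOfLength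
  have hR : ∀ n s, ∃ R, Ico s (s + n) ⊆ A → ChainOfLength f D₂ R (x (s + n)) (x s) := by
    intro n s
    by_cases hs : Ico s (s + n) ⊆ A
    · exact (hrev _ _ _ ((hxA hs).mono fun q hq => hq.1.1)).imp fun _ h _ => h
    · exact ⟨0, fun h => (hs h).elim⟩
  choose R hR using hR
  obtain ⟨v, r, hgood⟩ := hA.exists_blocks_near hC hcover x hm
  obtain ⟨k, hk0, hk⟩ :=
    exists_seq_of_forall_exists_ge hgood fun j s => s + (j + 1) + R (j + 1) s + N v + 1
  refine exists_tracedOn_thick_of_blocks hsurj htrace hk0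
    (fun j => hx.mono hDD₀ (hk j).1.1)
    (fun j => by have := (hk j).2; omega) fun j => ?_
  obtain ⟨⟨hA₁, hv₁, hr₁⟩, hbound⟩ := hk j
  obtain ⟨-, hv₂, hr₂⟩ := (hk (j + 1)).1
  refine chainOfLength_of_block_near_loop h₁₀ h₂₁ (hdvd v) (hloop v) (Nat.succ_pos j)
    ((hxA hA₁).mono hDD₂) (hR _ _ hA₁) (hDD₂ hv₁) hv₁.1.2 hv₁.2.2 (hDD₂ hv₂.symm) (by omega) ?_
  rw [show j + 1 + (k (j + 1) - (k j + (j + 1))) = k (j + 1) - k j by omega]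
  exact Nat.dvd_of_mod_eq_zero (Nat.sub_mod_eq_zero_of_mod_eq (hr₂.trans hr₁.symm))

end ThickShadowing

/-- for a chain recurrent compact dynamical system, topological shadowing,
(𝒟, F_t)-shadowing, (F_t, F_t)-shadowing and (ℕ, F_t)-shadowing are equivalent. -/
theorem shadowing_tfae_of_chainRecurrent
    {X : Type*} [UniformSpace X] [CompactSpace X]
    (f : X → X) (hf : Continuous f) (hsurj : Function.Surjective f)
    (hcr : CR f = Set.univ) :
    List.TFAE
      [TopShadowing f,
       FGShadowing f densityOneFamily thickFamily,
       FGShadowing f thickFamily thickFamily,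
       FGShadowing f {(Set.univ : Set ℕ)} thickFamily] := by
  tfae_have 1 → 3 := TopShadowing.fgShadowing_thickFamily hf hsurj hcr
  tfae_have 3 → 2 := fun h => h.mono (fun _ => thick_of_lowerDensity_eq_one) subset_rfl
  tfae_have 2 → 4 := fun h => h.mono (singleton_subset_iff.2 lowerDensity_univ) subset_rfl
  tfae_have 4 → 1 := topShadowing_of_fgShadowing_univ hf hcr
  tfae_finish
end

section
/- Let (X, f) be a dynamical system, where X is a compact uniform space and f : X → X is a continuous surjection, and suppose f is chain recurrent, i.e., CR(f) = X. If f has topological (ℕ, F_t)-shadowing (that is, for every entourage E there is an entourage D such that every D-pseudo orbit is E-traced by some point of X on some thick set), then f has topological shadowing. -/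
open Filter Set Function

/-!
Given an entourage `E`, choose a closed `E₂ ⊆ E` and let `D` be the entourage that thick
shadowing provides for `E₂`. Since every point is chain recurrent and `f` is uniformly continuous,
a small enough `D₀` lets every `D₀`-step `x i → x (i + 1)` be retraced by a `D`-chain back to
`x i`. Hence any initial segment `x 0, …, x n` of a `D₀`-pseudo orbit closes up to a periodic
`D`-pseudo orbit. A point tracing it on a thick set, which contains a full period followed by
`n + 1` consecutive times, traces the segment after a whole number of periods. Compactness and the
closedness of `E₂` turn these finite tracings into a tracing of the whole orbit.
-/

open Uniformity

section

variable {X : Type*} {f : X → X} {D D' E : Set (X × X)}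

lemma PseudoOrbitOn.exists_append {n m : ℕ} {c c' : ℕ → X} (hc : PseudoOrbitOn f D c (Iio n))
    (hc' : PseudoOrbitOn f D c' (Iio m)) (hcc' : c n = c' 0) :
    ∃ c'' : ℕ → X, EqOn c'' c (Iic n) ∧ c'' (n + m) = c' m ∧
      PseudoOrbitOn f D c'' (Iio (n + m)) := by
  refine ⟨fun i => if i ≤ n then c i else c' (i - n), fun i (hi : i ≤ n) => if_pos hi, ?_, ?_⟩
  · rcases Nat.eq_zero_or_pos m with rfl | hm
    · simp [hcc']
    · simp only [show ¬n + m ≤ n by omega, if_false, Nat.add_sub_cancel_left]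
  · intro i (hi : i < n + m)
    rcases lt_or_ge i n with hin | hin
    · simpa only [show i ≤ n by omega, show i + 1 ≤ n by omega, if_true] using hc i hin
    · have hstep := hc' (i - n) (show i - n < m by omega)
      rcases hin.eq_or_lt with rfl | hin
      · simpa [hcc'] using hstep
      · simpa only [show ¬i ≤ n by omega, show ¬i + 1 ≤ n by omega, if_false,
          show i + 1 - n = i - n + 1 by omega] using hstep

namespace DChain

variable {x y z : X}

lemma single (h : (f x, y) ∈ D) : DChain f D x y := by
  refine ⟨1, le_rfl, fun i => if i = 0 then x else y, rfl, rfl, fun i hi => ?_⟩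
  obtain rfl : i = 0 := by omega
  simpa using h

lemma trans (hxy : DChain f D x y) (hyz : DChain f D y z) : DChain f D x z := by
  obtain ⟨n, hn, c, rfl, rfl, hc⟩ := hxy
  obtain ⟨m, -, c', hc'0, rfl, hc'⟩ := hyz
  obtain ⟨c'', hc''c, hc''m, hc''⟩ := PseudoOrbitOn.exists_append (f := f) hc hc' hc'0.symm
  exact ⟨n + m, by omega, c'', hc''c (Nat.zero_le n), hc''m, hc''⟩

lemma mono (h : DChain f D x y) (hDD' : D ⊆ D') : DChain f D' x y := by
  obtain ⟨n, hn, c, hc0, hcn, hc⟩ := h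
  exact ⟨n, hn, c, hc0, hcn, fun i hi => hDD' (hc i hi)⟩

lemma head_cases (h : DChain f D x y) : (f x, y) ∈ D ∨ ∃ z, (f x, z) ∈ D ∧ DChain f D z y := by
  obtain ⟨n, hn, c, rfl, rfl, hc⟩ := h
  rcases hn.eq_or_lt with rfl | hn
  · exact .inl (hc 0 one_pos)
  · refine .inr ⟨c 1, hc 0 (by omega), n - 1, by omega, fun i => c (i + 1), rfl, ?_,
      fun i hi => hc (i + 1) (by omega)⟩
    simp only [Nat.sub_add_cancel hn.le]

lemma exists_step_of_self (h : DChain f D x x) : ∃ z, (f x, z) ∈ D ∧ DChain f D z x :=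
  h.head_cases.elim (fun hxx => ⟨x, hxx, h⟩) id

end DChain

lemma PseudoOrbitOn.dChain_back {D₀ : Set (X × X)} {x : ℕ → X} {n : ℕ}
    (hloop : ∀ a, DChain f D a a) (hback : ∀ a b, (f a, b) ∈ D₀ → DChain f D b a)
    (hx : PseudoOrbitOn f D₀ x (Iio n)) : DChain f D (x n) (x 0) := by
  induction n with
  | zero => exact hloop (x 0)
  | succ n ih =>
    exact (hback _ _ (hx n (Nat.lt_succ_self n))).trans
      (ih fun i (hi : i < n) => hx i (Nat.lt_succ_of_lt hi))

lemma PseudoOrbitOn.mod_of_eq {w : ℕ → X} {p : ℕ} (hp : 0 < p) (hw : PseudoOrbitOn f D w (Iio p))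
    (hwp : w p = w 0) : PseudoOrbitOn f D (fun i => w (i % p)) univ := by
  intro i _
  have hi : i % p < p := Nat.mod_lt i hp
  have hsucc : (i + 1) % p = (i % p + 1) % p := (Nat.mod_add_mod i p 1).symm
  show (f (w (i % p)), w ((i + 1) % p)) ∈ D
  by_cases hlast : i % p + 1 = p
  · have hstep := hw _ hi
    rw [hsucc, hlast, Nat.mod_self]
    rwa [hlast, hwp] at hstep
  · rw [hsucc, Nat.mod_eq_of_lt (show i % p + 1 < p by omega)]
    exact hw _ hi

lemma PseudoOrbitOn.exists_periodic_eqOn {x : ℕ → X} {n : ℕ} (hx : PseudoOrbitOn f D x (Iio n))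
    (hback : DChain f D (x n) (x 0)) :
    ∃ x' : ℕ → X, ∃ p, 0 < p ∧ Periodic x' p ∧ PseudoOrbitOn f D x' univ ∧ EqOn x' x (Iic n) := by
  obtain ⟨q, hq, c, hc0, hcq, hc⟩ := hback
  obtain ⟨w, hwx, hwq, hw⟩ := hx.exists_append (m := q) hc hc0.symm
  have hp : 0 < n + q := by omega
  refine ⟨fun i => w (i % (n + q)), n + q, hp, fun i => by simp, hw.mod_of_eq hp ?_, fun i hi => ?_⟩
  · rw [hwq, hcq, hwx (Nat.zero_le n)]
  · simp only [Nat.mod_eq_of_lt (show i < n + q by simp at hi; omega), hwx hi]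

lemma Function.Periodic.exists_tracedOn_Iic {x : ℕ → X} {p : ℕ} (hper : Periodic x p) (hp : 0 < p)
    {B : Set ℕ} (hB : Thick B) {y : X} (hy : TracedOn f E x y B) (n : ℕ) :
    ∃ z, TracedOn f E x z (Iic n) := by
  obtain ⟨k, hk⟩ := hB (p + n + 1)
  -- the first multiple of `p` after `k`
  set m := k / p + 1
  have hkm : k < m * p := by simpa [m, add_mul] using Nat.lt_div_mul_add (a := k) hp
  have hmk : m * p ≤ k + p := by simpa [m, add_mul] using Nat.div_mul_le_self k p
  refine ⟨f^[m * p] y, fun i (hi : i ≤ n) => ?_⟩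
  have hiB : i + m * p ∈ B := by
    simpa [show k + (m * p - k + i) = i + m * p by omega] using hk (m * p - k + i) (by omega)
  have hxi : x (i + m * p) = x i := by simpa using hper.nat_mul m i
  simpa [← iterate_add_apply, hxi] using hy _ hiB

lemma exists_mem_uniformity_dChain_back [UniformSpace X] (hf : UniformContinuous f)
    (hcr : CR f = univ) (hD : D ∈ 𝓤 X) :
    ∃ D₀ ∈ 𝓤 X, D₀ ⊆ D ∧ ∀ a b, (f a, b) ∈ D₀ → DChain f D b a := by
  obtain ⟨V, hV, hVD⟩ := comp_mem_uniformity_sets hD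
  have hU : (fun p : X × X => (f p.1, f p.2)) ⁻¹' V ∈ 𝓤 X := hf hV
  obtain ⟨D₀, hD₀, hD₀symm, hD₀comp⟩ :=
    comp_symm_mem_uniformity_sets (inter_mem (inter_mem hU hV) hD)
  have hD₀sub : D₀ ⊆ _ := (subset_comp_self_of_mem_uniformity hD₀).trans hD₀comp
  refine ⟨D₀, hD₀, fun p hp => (hD₀sub hp).2, fun a b hab => ?_⟩
  obtain ⟨e, hae, hea⟩ := ((hcr ▸ mem_univ a : a ∈ CR f) D₀ hD₀).exists_step_of_self
  -- `b` and `e` are both `D₀`-close to `f a`, so `f b` and `f e` are `V`-close.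
  have hbe : (f b, f e) ∈ V :=
    (hD₀comp (SetRel.prodMk_mem_comp (hD₀symm.symm _ _ hab) hae)).1.1
  rcases hea.head_cases with hea | ⟨e', hee', he'a⟩
  · exact .single (hVD (SetRel.prodMk_mem_comp hbe (hD₀sub hea).1.2))
  · exact .trans (.single (hVD (SetRel.prodMk_mem_comp hbe (hD₀sub hee').1.2)))
      (he'a.mono fun p hp => (hD₀sub hp).2)

lemma exists_tracedOn_univ_of_forall_tracedOn_Iic [TopologicalSpace X] [CompactSpace X]
    (hf : Continuous f) (hE : IsClosed E) {x : ℕ → X} (h : ∀ n, ∃ z, TracedOn f E x z (Iic n)) :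
    ∃ z, TracedOn f E x z univ := by
  set K : ℕ → Set X := fun n => {z | TracedOn f E x z (Iic n)}
  have hK : ∀ n, IsClosed (K n) := fun n => by
    simp only [K, TracedOn, ofPred_forall]
    exact isClosed_iInter fun i => isClosed_iInter fun _ => hE.preimage (by fun_prop)
  obtain ⟨z, hz⟩ := IsCompact.nonempty_iInter_of_sequence_nonempty_isCompact_isClosed K
    (fun n z hz i (hi : i ≤ n) => hz i (Nat.le_succ_of_le hi)) h (hK 0).isCompact hK
  exact ⟨z, fun i _ => mem_iInter.mp hz i i (mem_Iic.2 le_rfl)⟩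

end

theorem shadowing_of_nat_thick_shadowing_general
    {X : Type*} [UniformSpace X] [CompactSpace X]
    (f : X → X) (hf : Continuous f)
    (hcr : CR f = Set.univ)
    (h : ∀ E ∈ uniformity X, ∃ D ∈ uniformity X,
      ∀ x : ℕ → X, PseudoOrbitOn f D x Set.univ →
        ∃ y : X, ∃ B : Set ℕ, Thick B ∧ TracedOn f E x y B) :
    TopShadowing f := by
  intro E hE
  obtain ⟨E₂, ⟨hE₂, hE₂c⟩, hE₂E⟩ := uniformity_hasBasis_closed.mem_iff.mp hE
  obtain ⟨D, hD, hshadow⟩ := h E₂ hE₂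
  obtain ⟨D₀, hD₀, hD₀D, hback⟩ :=
    exists_mem_uniformity_dChain_back (CompactSpace.uniformContinuous_of_continuous hf) hcr hD
  refine ⟨D₀, hD₀, fun x hx => ?_⟩
  have hloop : ∀ a, DChain f D a a := fun a => (hcr ▸ mem_univ a : a ∈ CR f) D hD
  have hsegment : ∀ n, ∃ z, TracedOn f E₂ x z (Iic n) := fun n => by
    have hxn : PseudoOrbitOn f D₀ x (Iio n) := fun i _ => hx i (mem_univ i)
    have hxnD : PseudoOrbitOn f D x (Iio n) := fun i hi => hD₀D (hxn i hi)
    obtain ⟨x', p, hp, hper, hx', hx'x⟩ :=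
      hxnD.exists_periodic_eqOn (hxn.dChain_back hloop hback)
    obtain ⟨y, B, hB, hy⟩ := hshadow x' hx'
    obtain ⟨z, hz⟩ := hper.exists_tracedOn_Iic hp hB hy n
    exact ⟨z, fun i hi => hx'x hi ▸ hz i hi⟩
  obtain ⟨z, hz⟩ := exists_tracedOn_univ_of_forall_tracedOn_Iic hf hE₂c hsegment
  exact ⟨z, fun i hi => hE₂E (hz i hi)⟩

/-- for a chain recurrent system, topological (ℕ, F_t)-shadowing implies
topological shadowing. -/
theorem shadowing_of_nat_thick_shadowing
    {X : Type*} [UniformSpace X] [CompactSpace X]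
    (f : X → X) (hf : Continuous f) (hsurj : Function.Surjective f)
    (hcr : CR f = Set.univ)
    (h : ∀ E ∈ uniformity X, ∃ D ∈ uniformity X,
      ∀ x : ℕ → X, PseudoOrbitOn f D x Set.univ →
        ∃ y : X, ∃ B : Set ℕ, Thick B ∧ TracedOn f E x y B) :
    TopShadowing f :=
  shadowing_of_nat_thick_shadowing_general f hf hcr h
end

section
/- Let (X, f) be a dynamical system, where X is a compact uniform space and f : X → X is a continuous surjection. For every entourage E there exists an entourage D such that: if x_0, x_1, …, x_n is a D-chain from x_0 to x_0 (i.e., x_n = x_0), then там exists an E-chain y_0, y_1, …, y_n from y_0 to y_0 (i.e., y_n = y_0) with all y_i ∈ CR(f) and (x_i, y_i) ∈ E for all 0 ≤ i ≤ n. -/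
open Filter Set Function

/-! For an entourage `D` let `P D` be the set of points lying on a closed `D`-chain. Replacing the
endpoints of a closed chain through a nearby point shows `closure (P D₀) ⊆ P D` for small `D₀`, so
`⋂ D, closure (P D) = CR f`, and by compactness `P D` lies in the `E`-neighbourhood of `CR f` for
some `D`. Every point of a closed `D`-chain is in `P D`; moving each of them to a nearby chain
recurrent point keeps, by uniform continuity of `f`, a closed `E`-chain. -/

open scoped Uniformity SetRel

section

variable {X : Type*} {f : X → X}

lemma DChain.mono_s6 {D D' : Set (X × X)} (h : D ⊆ D') {x y : X} (hc : DChain f D x y) :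
    DChain f D' x y := by
  obtain ⟨n, hn, c, h0, hcn, hs⟩ := hc
  exact ⟨n, hn, c, h0, hcn, fun i hi => h (hs i hi)⟩

lemma closed_chain_step_mod {D : Set (X × X)} {n : ℕ} (hn : 0 < n) {c : ℕ → X}
    (hc : c n = c 0) (hs : ∀ i < n, (f (c i), c (i + 1)) ∈ D) (k : ℕ) :
    (f (c (k % n)), c ((k + 1) % n)) ∈ D := by
  have hk := Nat.mod_lt k hn
  rw [← Nat.mod_add_mod k n 1]
  rcases (Nat.add_one_le_of_lt hk).lt_or_eq with hlt | heq
  · rw [Nat.mod_eq_of_lt hlt]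
    exact hs _ hk
  · rw [heq, Nat.mod_self, ← hc]
    simpa only [heq] using hs _ hk

lemma dChain_self_of_closed_chain {D : Set (X × X)} {n : ℕ} (hn : 1 ≤ n) {c : ℕ → X}
    (hc : c n = c 0) (hs : ∀ i < n, (f (c i), c (i + 1)) ∈ D) {i : ℕ} (hi : i ≤ n) :
    DChain f D (c i) (c i) := by
  have hci : c (i % n) = c i := by
    rcases hi.lt_or_eq with hlt | rfl
    · rw [Nat.mod_eq_of_lt hlt]
    · rw [Nat.mod_self, hc]
  refine ⟨n, hn, fun j => c ((i + j) % n), by simpa using hci, by simpa using hci, ?_⟩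
  intro j _
  simpa only [Nat.add_assoc] using closed_chain_step_mod hn hc hs (i + j)

lemma chain_of_near_chain {W D : SetRel X X} [W.IsSymm] (hWD : W ○ W ○ W ⊆ D) {n : ℕ}
    {c c' : ℕ → X} (hs : ∀ i < n, (f (c i), c (i + 1)) ∈ W)
    (hnear : ∀ i ≤ n, (c i, c' i) ∈ W ∩ Prod.map f f ⁻¹' W) :
    ∀ i < n, (f (c' i), c' (i + 1)) ∈ D := fun i hi =>
  hWD ⟨_, ⟨_, W.symm (hnear i hi.le).2, hs i hi⟩, (hnear (i + 1) hi).1⟩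

variable [UniformSpace X]

lemma exists_closure_setOf_dChain_self_subset (hf : UniformContinuous f)
    {D : Set (X × X)} (hD : D ∈ 𝓤 X) :
    ∃ D₀ ∈ 𝓤 X, closure {x | DChain f D₀ x x} ⊆ {x | DChain f D x x} := by
  classical
  obtain ⟨W, hW, hWsymm, hWD⟩ := comp_comp_symm_mem_uniformity_sets hD
  have hW' : W ∩ Prod.map f f ⁻¹' W ∈ 𝓤 X := inter_mem hW (hf hW)
  refine ⟨_, hW', fun x hx => ?_⟩
  obtain ⟨z, hxz, n, hn, c, hc0, hcn, hs⟩ := UniformSpace.mem_closure_iff_ball.1 hx hW'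
  refine ⟨n, hn, fun j => if j = 0 ∨ j = n then x else c j, by simp, by simp,
    chain_of_near_chain hWD (fun i hi => (hs i hi).1) fun i _ => ?_⟩
  split_ifs with hend
  · have hcz : c i = z := by rcases hend with rfl | rfl <;> assumption
    exact hcz ▸ ⟨SetRel.symm W hxz.1, SetRel.symm W hxz.2⟩
  · exact ⟨refl_mem_uniformity hW, (refl_mem_uniformity hW : (f (c i), f (c i)) ∈ W)⟩

lemma exists_entourage_dChain_self_near_CR [CompactSpace X] (hf : Continuous f)
    {E : Set (X × X)} (hE : E ∈ 𝓤 X) :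
    ∃ D ∈ 𝓤 X, ∀ x, DChain f D x x → ∃ y ∈ CR f, (x, y) ∈ E := by
  have huc := CompactSpace.uniformContinuous_of_continuous hf
  let V : {D // D ∈ 𝓤 X} → Set X := fun D => closure {x | DChain f D.1 x x}
  have hV : Directed (· ⊇ ·) V := fun D D' =>
    ⟨⟨D.1 ∩ D'.1, inter_mem D.2 D'.2⟩,
      closure_mono fun _ hx => hx.mono_s6 inter_subset_left,
      closure_mono fun _ hx => hx.mono_s6 inter_subset_right⟩
  have hCR : ⋂ D, V D ⊆ CR f := fun x hx D hD => by
    obtain ⟨D₀, hD₀, hsub⟩ := exists_closure_setOf_dChain_self_subset huc hD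
    exact hsub (mem_iInter.1 hx ⟨D₀, hD₀⟩)
  obtain ⟨D, hDU⟩ := exists_subset_nhds_of_compactSpace hV (fun _ => isClosed_closure)
    (U := {x | ∃ y ∈ CR f, (x, y) ∈ E}) fun y hy =>
      mem_of_superset (mem_nhds_right y hE) fun x hx => ⟨y, hCR hy, hx⟩
  exact ⟨D.1, D.2, fun x hx => hDU (subset_closure hx)⟩

end

theorem closed_chain_approx_in_CR_general
    {X : Type*} [UniformSpace X] [CompactSpace X]
    (f : X → X) (hf : Continuous f) :
    ∀ E ∈ uniformity X, ∃ D ∈ uniformity X,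
      ∀ n : ℕ, 1 ≤ n → ∀ c : ℕ → X, c n = c 0 →
        (∀ i < n, (f (c i), c (i + 1)) ∈ D) →
        ∃ y : ℕ → X, y n = y 0 ∧ (∀ i ≤ n, y i ∈ CR f) ∧
          (∀ i < n, (f (y i), y (i + 1)) ∈ E) ∧
          ∀ i ≤ n, (c i, y i) ∈ E := by
  intro E hE
  obtain ⟨W, hW, hWsymm, hWE⟩ := comp_comp_symm_mem_uniformity_sets hE
  have hW' : W ∩ Prod.map f f ⁻¹' W ∈ 𝓤 X :=
    inter_mem hW (CompactSpace.uniformContinuous_of_continuous hf hW)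
  have hWE' : W ⊆ E :=
    have := isRefl_of_mem_uniformity hW
    (SetRel.left_subset_comp.trans SetRel.left_subset_comp).trans hWE
  obtain ⟨D, hD, hnear⟩ := exists_entourage_dChain_self_near_CR hf hW'
  choose! g hgCR hg using hnear
  refine ⟨D ∩ W, inter_mem hD hW, fun n hn c hc hs => ?_⟩
  have hcD : ∀ i ≤ n, DChain f D (c i) (c i) := fun i hi =>
    dChain_self_of_closed_chain hn hc (fun j hj => (hs j hj).1) hi
  exact ⟨g ∘ c, congrArg g hc, fun i hi => hgCR _ (hcD i hi),
    chain_of_near_chain hWE (fun i hi => (hs i hi).2) fun i hi => hg _ (hcD i hi),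
    fun i hi => hWE' (hg _ (hcD i hi)).1⟩

/-- closed D-chains are E-approximated by closed E-chains in CR(f). -/
theorem closed_chain_approx_in_CR
    {X : Type*} [UniformSpace X] [CompactSpace X]
    (f : X → X) (hf : Continuous f) (hsurj : Function.Surjective f) :
    ∀ E ∈ uniformity X, ∃ D ∈ uniformity X,
      ∀ n : ℕ, 1 ≤ n → ∀ c : ℕ → X, c n = c 0 →
        (∀ i < n, (f (c i), c (i + 1)) ∈ D) →
        ∃ y : ℕ → X, y n = y 0 ∧ (∀ i ≤ n, y i ∈ CR f) ∧
          (∀ i < n, (f (y i), y (i + 1)) ∈ E) ∧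
          ∀ i ≤ n, (c i, y i) ∈ E :=
  closed_chain_approx_in_CR_general f hf
end

section
/- Let (X, f) be a dynamical system, where X is a compact uniform space and f : X → X is a continuous surjection. If f has topological finite shadowing (for every entourage E there exists an entourage D such that every finite D-chain is E-traced by some point of X), then f has topological shadowing. -/
open Filter Set Function

/-- topological finite shadowing implies topological shadowing. -/
theorem shadowing_of_finite_shadowing
    {X : Type*} [UniformSpace X] [CompactSpace X]
    (f : X → X) (hf : Continuous f) (hsurj : Function.Surjective f)
    (hfin : ∀ E ∈ uniformity X, ∃ D ∈ uniformity X,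
      ∀ n : ℕ, 1 ≤ n → ∀ c : ℕ → X, (∀ i < n, (f (c i), c (i + 1)) ∈ D) →
        ∃ y : X, ∀ i ≤ n, (f^[i] y, c i) ∈ E) :
    TopShadowing f := by
  intro E hE
  obtain ⟨E₀, ⟨hE₀, hE₀c⟩, hE₀E⟩ := (uniformity_hasBasis_closed (α := X)).mem_iff.mp hE
  obtain ⟨D, hD, hDtrace⟩ := hfin E₀ hE₀
  refine ⟨D, hD, fun x hx => ?_⟩
  have hyn : ∀ n : ℕ, ∃ y : X, ∀ i ≤ n + 1, (f^[i] y, x i) ∈ E₀ := fun n =>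
    hDtrace (n + 1) (Nat.succ_le_succ (Nat.zero_le n)) x (fun i _ => hx i trivial)
  choose y hy using hyn
  obtain ⟨z, hz⟩ := exists_clusterPt_of_compactSpace (f := Filter.map y Filter.atTop)
  refine ⟨z, fun i _ => ?_⟩
  have hclosed : IsClosed {w : X | (f^[i] w, x i) ∈ E₀} :=
    hE₀c.preimage ((hf.iterate i).prodMk continuous_const)
  have hev : ∀ᶠ n in Filter.atTop, y n ∈ {w : X | (f^[i] w, x i) ∈ E₀} := by
    filter_upwards [Filter.eventually_ge_atTop i] with n hn
    exact hy n i (hn.trans (Nat.le_succ n))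
  have : ClusterPt z (Filter.principal {w : X | (f^[i] w, x i) ∈ E₀}) :=
    hz.mono (Filter.le_principal_iff.mpr (Filter.mem_map.mpr hev))
  exact hE₀E (hclosed.closure_subset (mem_closure_iff_clusterPt.mpr this))
end

section
/- Let (X, f) be a dynamical system, where X is a compact uniform space and f : X → X is a continuous surjection, and let x, y ∈ X. Then (x, y) is a syndetically proximal pair if and only if for every entourage E the set {n ∈ ℕ : (f^n(x), f^n(y)) ∈ E} is thickly syndetic. -/
open Filter Set Function

/-- (x, y) is syndetically proximal iff for every entourage E the set
{n : (fⁿ(x), fⁿ(y)) ∈ E} is thickly syndetic. -/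
theorem syndProx_iff_thicklySyndetic
    {X : Type*} [UniformSpace X] [CompactSpace X]
    (f : X → X) (hf : Continuous f) (hsurj : Function.Surjective f)
    (x y : X) :
    SyndProx f x y ↔
      ∀ E ∈ uniformity X, ThicklySyndetic {n : ℕ | (f^[n] x, f^[n] y) ∈ E} := by
  constructor
  · intro h E hE n
    have huc : ∀ i : ℕ, UniformContinuous (f^[i]) := fun i =>
      CompactSpace.uniformContinuous_of_continuous (hf.iterate i)
    set D : Set (X × X) := ⋂ i ∈ Finset.range n,
      (fun p : X × X => (f^[i] p.1, f^[i] p.2)) ⁻¹' E with hDdef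
    have hDu : D ∈ uniformity X := by
      rw [hDdef]
      exact (Filter.biInter_mem (Finset.range n).finite_toSet).2
        (fun i _ => (huc i) hE)
    have hDE : ∀ p : X × X, p ∈ D → ∀ i < n, (f^[i] p.1, f^[i] p.2) ∈ E := by
      intro p hp i hi
      have := Set.mem_iInter₂.1 hp i (Finset.mem_range.2 hi)
      exact this
    obtain ⟨M, hM⟩ := h D hDu
    refine ⟨M, fun k => ?_⟩
    obtain ⟨j, hj, hjk, hjM⟩ := hM k
    refine ⟨j, fun i hi => ?_, hjk, hjM⟩
    have := hDE _ hj i hi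
    simpa [Set.mem_setOf_eq, Nat.add_comm j i, Function.iterate_add_apply] using this
  · intro h E hE
    obtain ⟨M, hM⟩ := h E hE 1
    refine ⟨M, fun k => ?_⟩
    obtain ⟨j, hj, h1, h2⟩ := hM k
    exact ⟨j, by simpa using hj 0 (by norm_num), h1, h2⟩
end

section
/- Let (X, f) be a dynamical system, where X is a compact Hausdorff uniform space and f : X → X is a continuous surjection. If f has a fixed point c such that {c} is the unique minimal subset of X (i.e., every nonempty closed f-invariant subset of X contains c, and {c} is a minimal set), then f is syndetically proximal: every pair (x, y) ∈ X × X is a syndetically proximal pair. -/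
open Filter Set Function

/-! If the orbit of `x` avoided a neighbourhood `U` of `c` along arbitrarily long blocks of
times, a cluster point of the starting points of these blocks would have its whole forward orbit
in the closed set `(interior U)ᶜ`. The points with this property form a nonempty closed invariant
set, which must contain `c`: a contradiction. For `f × f`, the point `(c, c)` inherits the
property from `c` by projecting a closed invariant set onto the two factors, and every entourage
is a neighbourhood of `(c, c)`. -/

open Topology

theorem not_syndetic_iff {A : Set ℕ} : ¬ Syndetic A ↔ ∀ M, ∃ k, ∀ i ≤ M, k + i ∉ A := by
  simp only [Syndetic, not_exists, not_forall, not_and, not_le]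
  refine forall_congr' fun M => exists_congr fun k => ⟨fun h i hi hA => ?_, fun h j hA hkj => ?_⟩
  · exact absurd (h _ hA (Nat.le_add_right k i)) (by omega)
  · by_contra! hj
    exact h (j - k) (by omega) (by rwa [Nat.add_sub_cancel' hkj])

section ClosedInvariant

variable {X Y Z : Type*} [TopologicalSpace X] [TopologicalSpace Y] [TopologicalSpace Z]

/-- For a fixed point `c`, this says that `{c}` is the unique minimal set of `f`. -/
def MemEveryClosedInvariant (f : X → X) (c : X) : Prop :=
  ∀ K : Set X, K.Nonempty → IsClosed K → f '' K ⊆ K → c ∈ K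

namespace MemEveryClosedInvariant

variable {f : X → X} {c : X}

theorem mem_of_forall_iterate_mem (h : MemEveryClosedInvariant f c) (hf : Continuous f)
    {F : Set X} (hF : IsClosed F) {y : X} (hy : ∀ n, f^[n] y ∈ F) : c ∈ F := by
  have hinv : f '' (⋂ n, f^[n] ⁻¹' F) ⊆ ⋂ n, f^[n] ⁻¹' F := by
    rintro _ ⟨z, hz, rfl⟩
    refine mem_iInter.2 fun n => ?_
    rw [mem_preimage, ← iterate_succ_apply]
    exact mem_iInter.1 hz (n + 1)
  have hc := h _ ⟨y, mem_iInter.2 hy⟩ (isClosed_iInter fun n => hF.preimage (hf.iterate n)) hinv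
  exact mem_iInter.1 hc 0

theorem syndetic_iterate_mem [CompactSpace X] (h : MemEveryClosedInvariant f c)
    (hf : Continuous f) (x : X) {U : Set X} (hU : U ∈ 𝓝 c) :
    Syndetic {n | f^[n] x ∈ U} := by
  by_contra hns
  choose k hk using not_syndetic_iff.1 hns
  obtain ⟨y, hy⟩ := exists_clusterPt_of_compactSpace (map (fun M => f^[k M] x) atTop)
  have horbit : ∀ n, f^[n] y ∈ (interior U)ᶜ := fun n =>
    (isOpen_interior.isClosed_compl.preimage (hf.iterate n)).mem_of_mapClusterPt hy <|
      (eventually_ge_atTop n).mono fun M hM hU' => hk M n hM <| by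
        rw [mem_ofPred_eq, add_comm, iterate_add_apply]
        exact interior_subset hU'
  exact h.mem_of_forall_iterate_mem hf isOpen_interior.isClosed_compl horbit
    (mem_interior_iff_mem_nhds.2 hU)

theorem mem_image_of_semiconj (h : MemEveryClosedInvariant f c) {φ : Z → X} {F : Z → Z}
    (hφ : IsClosedMap φ) (hφF : Semiconj φ F f) {K : Set Z} (hne : K.Nonempty)
    (hK : IsClosed K) (hinv : F '' K ⊆ K) : c ∈ φ '' K :=
  h _ (hne.image φ) (hφ K hK) (hφF.mapsTo_image (mapsTo_iff_image_subset.2 hinv)).image_subset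

theorem prodMap [CompactSpace X] [T1Space X] [CompactSpace Y] {g : Y → Y} {d : Y}
    (hfc : MemEveryClosedInvariant f c) (hc : f c = c) (hgd : MemEveryClosedInvariant g d) :
    MemEveryClosedInvariant (Prod.map f g) (c, d) := by
  intro K hne hK hinv
  obtain ⟨p, hpK, hpc⟩ :=
    hfc.mem_image_of_semiconj isClosedMap_fst_of_compactSpace (fun _ => rfl) hne hK hinv
  set L := K ∩ Prod.fst ⁻¹' {c}
  have hLinv : Prod.map f g '' L ⊆ L := by
    rintro _ ⟨q, ⟨hqK, hqc⟩, rfl⟩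
    exact ⟨hinv ⟨q, hqK, rfl⟩, show f q.1 = c from (congrArg f hqc).trans hc⟩
  obtain ⟨q, ⟨hqK, hqc⟩, hqd⟩ :=
    hgd.mem_image_of_semiconj (K := L) isClosedMap_snd_of_compactSpace (fun _ => rfl)
      ⟨p, hpK, hpc⟩ (hK.inter (isClosed_singleton.preimage continuous_fst)) hLinv
  have hq : q = (c, d) := Prod.ext hqc hqd
  exact hq ▸ hqK

end MemEveryClosedInvariant

end ClosedInvariant

theorem syndProx_of_unique_minimal_fixed_point_general
    {X : Type*} [UniformSpace X] [CompactSpace X] [T2Space X]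
    (f : X → X) (hf : Continuous f)
    (c : X) (hc : f c = c)
    (hmin : ∀ K : Set X, K.Nonempty → IsClosed K → f '' K ⊆ K → c ∈ K) :
    ∀ x y : X, SyndProx f x y := by
  intro x y E hE
  have hcc : MemEveryClosedInvariant (Prod.map f f) (c, c) :=
    MemEveryClosedInvariant.prodMap hmin hc hmin
  simpa only [Prod.map_iterate, Prod.map_apply] using
    MemEveryClosedInvariant.syndetic_iterate_mem hcc (hf.prodMap hf) (x, y)
      (nhds_le_uniformity c hE)

/-- if f has a fixed point c such that {c} is the unique minimal subset of X,
then every pair is syndetically proximal. -/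
theorem syndProx_of_unique_minimal_fixed_point
    {X : Type*} [UniformSpace X] [CompactSpace X] [T2Space X]
    (f : X → X) (hf : Continuous f) (hsurj : Function.Surjective f)
    (c : X) (hc : f c = c)
    (hmin : ∀ K : Set X, K.Nonempty → IsClosed K → f '' K ⊆ K → c ∈ K) :
    ∀ x y : X, SyndProx f x y :=
  syndProx_of_unique_minimal_fixed_point_general f hf c hc hmin
end

section
/- Let (X, f) be a dynamical system, where X is a compact Hausdorff uniform space and f : X → X is a continuous surjection. If the set of minimal points of f is not dense in X, then f does not have topological (P(ℕ), F_ps)-shadowing, where P(ℕ) is the family of all subsets of ℕ and F_ps is the family of piecewise syndetic subsets of ℕ. -/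
open Filter Set Function

/-!
Take `z` outside the closure of the minimal points and a closed entourage `E` whose ball
`K = {w | (w, z) ∈ E}` contains no minimal point. The constant sequence `z` is a pseudo orbit on
`∅`, so shadowing yields `y` with `f^[n] y ∈ K` for `n` in a piecewise syndetic set. Compactness
turns the long syndetic blocks into a point `w` visiting `K` with bounded gaps; the closed invariant
set of such points contains a minimal set, whose points are minimal, and one of them lies in `K`.
-/

theorem PiecewiseSyndetic.exists_forall_exists_add_mem {B : Set ℕ} (hB : PiecewiseSyndetic B) :
    ∃ M, ∀ n, ∃ j, ∀ m ≤ n, ∃ i ≤ M, j + m + i ∈ B := by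
  obtain ⟨T, S, hT, ⟨M, hS⟩, rfl⟩ := hB
  refine ⟨M, fun n => ?_⟩
  obtain ⟨j, hj⟩ := hT (n + M + 1)
  refine ⟨j, fun m hm => ?_⟩
  obtain ⟨k, hkS, hjk, hkj⟩ := hS (j + m)
  refine ⟨k - (j + m), by omega, ?_⟩
  have hk : j + m + (k - (j + m)) = k := by omega
  rw [hk]
  exact ⟨by simpa [show j + (k - j) = k by omega] using hj (k - j) (by omega), hkS⟩

section MinimalSets

variable {X : Type*} [TopologicalSpace X] {f : X → X}

def IsMinimalSet (f : X → X) (Z : Set X) : Prop :=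
  Minimal (fun Z : Set X => Z.Nonempty ∧ IsClosed Z ∧ MapsTo f Z Z) Z

theorem exists_isMinimalSet_subset [CompactSpace X] {Y : Set X} (hY : IsClosed Y)
    (hne : Y.Nonempty) (hinv : MapsTo f Y Y) : ∃ Z ⊆ Y, IsMinimalSet f Z := by
  refine zorn_superset_nonempty _ (fun c hcS hchain hcne => ?_) Y ⟨hne, hY, hinv⟩
  have : Nonempty c := hcne.to_subtype
  refine ⟨⋂₀ c, ⟨?_, isClosed_sInter fun Z hZ => (hcS hZ).2.1,
    fun x hx Z hZ => (hcS hZ).2.2 (hx Z hZ)⟩, fun Z hZ => sInter_subset_of_mem hZ⟩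
  exact IsCompact.nonempty_sInter_of_directed_nonempty_isCompact_isClosed
    (fun a ha b hb => (hchain.total ha hb).elim (fun h => ⟨a, ha, le_rfl, h⟩)
      fun h => ⟨b, hb, h, le_rfl⟩) (fun Z hZ => (hcS hZ).1) (fun Z hZ => (hcS hZ).2.1.isCompact)
    (fun Z hZ => (hcS hZ).2.1)

theorem isClosed_setOf_exists_le_iterate_mem (hf : Continuous f) {K : Set X} (hK : IsClosed K)
    (M m : ℕ) : IsClosed {x | ∃ i ≤ M, f^[m + i] x ∈ K} := by
  have : {x | ∃ i ≤ M, f^[m + i] x ∈ K} = ⋃ i ∈ Iic M, f^[m + i] ⁻¹' K := by ext; simp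
  rw [this]
  exact (finite_Iic M).isClosed_biUnion fun i _ => hK.preimage (hf.iterate _)

end MinimalSets

section MinimalPoints

variable {X : Type*} [UniformSpace X] [CompactSpace X] {f : X → X}

theorem IsMinimalSet.minimalPt (hf : Continuous f) {Z : Set X} (hZ : IsMinimalSet f Z) {p : X}
    (hp : p ∈ Z) : MinimalPt f p := by
  intro U hU hpU
  -- The points of `Z` whose orbit misses `U` form a closed invariant subset of `Z` avoiding `p`.
  have hcover : Z ⊆ ⋃ n : ℕ, f^[n] ⁻¹' U := by
    by_contra hmiss
    set W := Z ∩ ⋂ n : ℕ, f^[n] ⁻¹' Uᶜ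
    have hWne : W.Nonempty := by
      obtain ⟨q, hqZ, hq⟩ := not_subset.mp hmiss
      exact ⟨q, hqZ, by simpa using hq⟩
    have hWcl : IsClosed W :=
      hZ.prop.2.1.inter (isClosed_iInter fun n => hU.isClosed_compl.preimage (hf.iterate n))
    have hWinv : MapsTo f W W := fun q ⟨hqZ, hq⟩ =>
      ⟨hZ.prop.2.2 hqZ, mem_iInter.mpr fun n => by
        simpa only [mem_preimage, ← iterate_succ_apply] using mem_iInter.mp hq (n + 1)⟩
    have hpW : p ∈ W := hZ.le_of_le ⟨hWne, hWcl, hWinv⟩ inter_subset_left hp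
    exact mem_iInter.mp hpW.2 0 hpU
  obtain ⟨t, ht⟩ := hZ.prop.2.1.isCompact.elim_finite_subcover _
    (fun n => hU.preimage (hf.iterate n)) hcover
  refine ⟨t.sup id, fun k => ?_⟩
  obtain ⟨n, hnt, hn⟩ := mem_iUnion₂.mp (ht (hZ.prop.2.2.iterate k hp))
  refine ⟨n + k, ?_, Nat.le_add_left _ _, by grind [Finset.le_sup (f := id) hnt]⟩
  show f^[n + k] p ∈ U
  rwa [iterate_add_apply]

theorem exists_minimalPt_mem_of_forall_exists_iterate_mem (hf : Continuous f) {K : Set X}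
    (hK : IsClosed K) {M : ℕ} {w : X} (hw : ∀ m, ∃ i ≤ M, f^[m + i] w ∈ K) :
    ∃ x ∈ K, MinimalPt f x := by
  set Y := {x | ∀ m, ∃ i ≤ M, f^[m + i] x ∈ K}
  have hYcl : IsClosed Y := by
    simpa only [Y, ofPred_forall] using
      isClosed_iInter (isClosed_setOf_exists_le_iterate_mem hf hK M)
  have hYinv : MapsTo f Y Y := fun x hx m => by
    obtain ⟨i, hiM, hi⟩ := hx (m + 1)
    exact ⟨i, hiM, by rwa [← iterate_succ_apply, Nat.succ_eq_add_one, Nat.add_right_comm]⟩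
  obtain ⟨Z, hZY, hZ⟩ := exists_isMinimalSet_subset hYcl ⟨w, hw⟩ hYinv
  obtain ⟨p, hp⟩ := hZ.prop.1
  obtain ⟨i, -, hi⟩ := hZY hp 0
  rw [zero_add] at hi
  exact ⟨_, hi, hZ.minimalPt hf (hZ.prop.2.2.iterate i hp)⟩

theorem exists_minimalPt_mem_of_piecewiseSyndetic (hf : Continuous f) {K : Set X}
    (hK : IsClosed K) {y : X} {B : Set ℕ} (hB : PiecewiseSyndetic B)
    (hBK : ∀ n ∈ B, f^[n] y ∈ K) :
    ∃ x ∈ K, MinimalPt f x := by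
  obtain ⟨M, hM⟩ := hB.exists_forall_exists_add_mem
  -- Finitely many windows `[m, m + M]` are all visited along the orbit of some `f^[j] y`.
  have hW : (univ ∩ ⋂ m, {x | ∃ i ≤ M, f^[m + i] x ∈ K}).Nonempty := by
    refine isCompact_univ.inter_iInter_nonempty _
      (isClosed_setOf_exists_le_iterate_mem hf hK M) fun u => ?_
    obtain ⟨j, hj⟩ := hM (u.sup id)
    refine ⟨f^[j] y, mem_univ _, mem_iInter₂.mpr fun m hm => ?_⟩
    obtain ⟨i, hiM, hi⟩ := hj m (Finset.le_sup (f := id) hm)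
    refine ⟨i, hiM, ?_⟩
    rw [← iterate_add_apply]
    exact hBK _ (by rwa [Nat.add_comm, ← Nat.add_assoc])
  obtain ⟨w, -, hw⟩ := hW
  exact exists_minimalPt_mem_of_forall_exists_iterate_mem hf hK (mem_iInter.mp hw)

end MinimalPoints

theorem exists_isClosed_entourage_of_notMem_closure {X : Type*} [UniformSpace X] {A : Set X}
    {z : X} (hz : z ∉ closure A) :
    ∃ E ∈ uniformity X, IsClosed E ∧ ∀ w, (w, z) ∈ E → w ∉ A := by
  have hU := mem_nhds_uniformity_iff_left.mp (isClosed_closure.isOpen_compl.mem_nhds hz)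
  obtain ⟨E, ⟨hE, hEcl⟩, hEU⟩ := uniformity_hasBasis_closed.mem_iff.mp hU
  exact ⟨E, hE, hEcl, fun w hw hwA => hEU hw rfl (subset_closure hwA)⟩

theorem not_fgShadowing_of_not_dense_minimal_general
    {X : Type*} [UniformSpace X] [CompactSpace X]
    (f : X → X) (hf : Continuous f)
    (hnd : ¬ Dense {x : X | MinimalPt f x}) :
    ¬ FGShadowing f (Set.univ : Set (Set ℕ)) psFamily := by
  intro hsh
  obtain ⟨z, hz⟩ : ∃ z, z ∉ closure {x : X | MinimalPt f x} := by
    simpa [Dense] using hnd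
  obtain ⟨E, hE, hEcl, hEz⟩ := exists_isClosed_entourage_of_notMem_closure hz
  obtain ⟨D, -, hD⟩ := hsh E hE
  obtain ⟨y, B, hB, htr⟩ := hD (fun _ => z) ⟨∅, mem_univ _, fun i hi => hi.elim⟩
  obtain ⟨x, hxz, hx⟩ := exists_minimalPt_mem_of_piecewiseSyndetic hf
    (hEcl.preimage (continuous_id.prodMk continuous_const)) hB htr
  exact hEz x hxz hx

/-- if the minimal points of f are not dense, then f does not have
topological (P(ℕ), F_ps)-shadowing. -/
theorem not_fgShadowing_of_not_dense_minimal
    {X : Type*} [UniformSpace X] [CompactSpace X] [T2Space X]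
    (f : X → X) (hf : Continuous f) (hsurj : Function.Surjective f)
    (hnd : ¬ Dense {x : X | MinimalPt f x}) :
    ¬ FGShadowing f (Set.univ : Set (Set ℕ)) psFamily :=
  not_fgShadowing_of_not_dense_minimal_general f hf hnd
end
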